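/- arXiv:2301.07324 — 5 statements merged into one kernel-verified Lean document; each statement's English description precedes it below -/
import Mathlib

section
/- (Conservation of total momentum) Let {(x_i, v_i)}_{i=1}^N be a solution of the RCS model with bonding force on [0,τ). Then the total momentum is conserved: ∑_{i=1}^N w_i(t) = ∑_{i=1}^N w_i(0) for all t ∈ [0,τ). -/
open scoped BigOperators ENNReal Topology
open Filter

noncomputable section

/-- Lorentz factor `Γ(v) = 1/√(1 - ‖v‖²/c²)`. -/
def lorentz {d : ℕ} (c : ℝ) (v : EuclideanSpace ℝ (Fin d)) : ℝ :=
  1 / Real.sqrt (1 - ‖v‖ ^ 2 / c ^ 2)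

/-- `F(v) = Γ(v)(1 + Γ(v)/c²)`. -/
def Fmap {d : ℕ} (c : ℝ) (v : EuclideanSpace ℝ (Fin d)) : ℝ :=
  lorentz c v * (1 + lorentz c v / c ^ 2)

/-- Momentum-like observable `ŵ(v) = F(v) v`. -/
def what {d : ℕ} (c : ℝ) (v : EuclideanSpace ℝ (Fin d)) : EuclideanSpace ℝ (Fin d) :=
  Fmap c v • v

/-- The time domain `[0, τ)` for `τ ∈ (0, ∞]`. -/
def dom (τ : ℝ≥0∞) : Set ℝ := {t : ℝ | 0 ≤ t ∧ ENNReal.ofReal t < τ}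

/-- Right-hand side of the momentum equation of the (R)CS model with a bonding force:
`(κ₀/N)∑_j φ(|x_i−x_j|)(v_j−v_i) + (1/2N)∑_{j≠i} [κ₁⟨v_j−v_i,(x_j−x_i)/|x_j−x_i|⟩ + κ₂(|x_i−x_j|−R_ij)]·(x_j−x_i)/|x_j−x_i|`. -/
def rcsForce {d : ℕ} (N : ℕ) (κ₀ κ₁ κ₂ : ℝ) (φ : ℝ → ℝ) (R : Fin N → Fin N → ℝ)
    (x v : Fin N → EuclideanSpace ℝ (Fin d)) (i : Fin N) : EuclideanSpace ℝ (Fin d) :=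
  (κ₀ / (N : ℝ)) • ∑ j, φ ‖x i - x j‖ • (v j - v i)
    + (1 / (2 * (N : ℝ))) • ∑ j ∈ Finset.univ.filter (fun j => j ≠ i),
        ((κ₁ * ((inner ℝ (v j - v i) (x j - x i) : ℝ) / ‖x j - x i‖)
            + κ₂ * (‖x i - x j‖ - R i j)) / ‖x j - x i‖) • (x j - x i)

/-- Solution of the relativistic Cucker–Smale model with bonding force and speed of light `c`
on `[0, τ)`: subluminal speeds, no collisions, `x_i' = v_i` and `w_i' = rcsForce` with
`w_i = ŵ(v_i)`. -/
def IsRCSSol {d : ℕ} (N : ℕ) (c κ₀ κ₁ κ₂ : ℝ) (φ : ℝ → ℝ) (R : Fin N → Fin N → ℝ)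
    (τ : ℝ≥0∞) (x v : Fin N → ℝ → EuclideanSpace ℝ (Fin d)) : Prop :=
  ∀ t ∈ dom τ,
    (∀ i, ‖v i t‖ < c) ∧
    (∀ i j, i ≠ j → x i t ≠ x j t) ∧
    (∀ i, HasDerivAt (x i) (v i t) t) ∧
    (∀ i, HasDerivAt (fun s => what c (v i s))
        (rcsForce N κ₀ κ₁ κ₂ φ R (fun k => x k t) (fun k => v k t) i) t)

/-- Relativistic kinetic energy `∑_i [c²(Γ_i − 1) + Γ_i² − log Γ_i]`. -/
def kinE {d : ℕ} (c : ℝ) {N : ℕ} (v : Fin N → EuclideanSpace ℝ (Fin d)) : ℝ :=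
  ∑ i, (c ^ 2 * (lorentz c (v i) - 1) + (lorentz c (v i) ^ 2 - Real.log (lorentz c (v i))))

/-- Potential energy `(κ₂/8N) ∑_{i≠j} (|x_i − x_j| − R_ij)²`. -/
def potE {d : ℕ} {N : ℕ} (κ₂ : ℝ) (R : Fin N → Fin N → ℝ)
    (x : Fin N → EuclideanSpace ℝ (Fin d)) : ℝ :=
  κ₂ / (8 * (N : ℝ)) * ∑ i, ∑ j ∈ Finset.univ.filter (fun j => j ≠ i), (‖x i - x j‖ - R i j) ^ 2

/-- Total relativistic energy. -/
def totE {d : ℕ} (c : ℝ) {N : ℕ} (κ₂ : ℝ) (R : Fin N → Fin N → ℝ)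
    (x v : Fin N → EuclideanSpace ℝ (Fin d)) : ℝ :=
  kinE c v + potE κ₂ R x


lemma sum_antisym {E : Type*} [AddCommGroup E] [Module ℝ E] {N : ℕ}
    (f : Fin N → Fin N → E) (h : ∀ i j, f j i = - f i j) :
    ∑ i, ∑ j, f i j = 0 := by
  have h1 : (∑ i, ∑ j, f i j) = - ∑ i, ∑ j, f i j := by
    calc ∑ i, ∑ j, f i j = ∑ j, ∑ i, f i j := Finset.sum_comm
      _ = ∑ j, ∑ i, -(f j i) :=
          Finset.sum_congr rfl fun j _ => Finset.sum_congr rfl fun i _ => h j i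
      _ = - ∑ j, ∑ i, f j i := by simp
  have h2 : (2 : ℝ) • (∑ i, ∑ j, f i j) = 0 := by
    rw [two_smul]; nth_rewrite 2 [h1]; simp
  rcases smul_eq_zero.mp h2 with h | h
  · norm_num at h
  · exact h

lemma rcsForce_sum_zero {d : ℕ} (N : ℕ) (κ₀ κ₁ κ₂ : ℝ) (φ : ℝ → ℝ)
    (R : Fin N → Fin N → ℝ) (hRsym : ∀ i j, R i j = R j i)
    (x v : Fin N → EuclideanSpace ℝ (Fin d)) :
    ∑ i, rcsForce N κ₀ κ₁ κ₂ φ R x v i = 0 := by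
  unfold rcsForce
  rw [Finset.sum_add_distrib, ← Finset.smul_sum, ← Finset.smul_sum]
  have hA : ∑ i, ∑ j, φ ‖x i - x j‖ • (v j - v i) = 0 := by
    apply sum_antisym
    intro i j
    rw [norm_sub_rev, ← neg_sub (v j) (v i), smul_neg]
  have hB : ∑ i, ∑ j ∈ Finset.univ.filter (fun j => j ≠ i),
      ((κ₁ * ((inner ℝ (v j - v i) (x j - x i) : ℝ) / ‖x j - x i‖)
          + κ₂ * (‖x i - x j‖ - R i j)) / ‖x j - x i‖) • (x j - x i) = 0 := by
    have hfull : ∀ i, ∑ j ∈ Finset.univ.filter (fun j => j ≠ i),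
        ((κ₁ * ((inner ℝ (v j - v i) (x j - x i) : ℝ) / ‖x j - x i‖)
            + κ₂ * (‖x i - x j‖ - R i j)) / ‖x j - x i‖) • (x j - x i)
        = ∑ j, ((κ₁ * ((inner ℝ (v j - v i) (x j - x i) : ℝ) / ‖x j - x i‖)
            + κ₂ * (‖x i - x j‖ - R i j)) / ‖x j - x i‖) • (x j - x i) := by
      intro i
      rw [Finset.sum_filter]
      apply Finset.sum_congr rfl
      intro j _
      by_cases hji : j = i
      · subst hji
        rw [if_neg (fun h => h rfl), sub_self, sub_self, smul_zero]
      · simp [hji]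
    simp_rw [hfull]
    apply sum_antisym
    intro i j
    have e1 : x i - x j = -(x j - x i) := by abel
    have e2 : v i - v j = -(v j - v i) := by abel
    rw [e1, e2, inner_neg_neg, norm_neg, hRsym j i, smul_neg]
  rw [hA, hB, smul_zero, smul_zero, add_zero]

/-- Conservation of total momentum for the RCS model with bonding force. -/
theorem total_momentum_conserved
    (d N : ℕ) (hd : 1 ≤ d) (hN : 2 ≤ N)
    (c κ₀ κ₁ κ₂ : ℝ) (hc : 0 < c) (hκ₀ : 0 ≤ κ₀) (hκ₁ : 0 ≤ κ₁) (hκ₂ : 0 ≤ κ₂)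
    (φ : ℝ → ℝ) (φM : ℝ) (hφ : LocallyLipschitz φ)
    (hφ0 : ∀ r, 0 ≤ φ r) (hφM : ∀ r, φ r ≤ φM)
    (R : Fin N → Fin N → ℝ) (hR0 : ∀ i, R i i = 0)
    (hRsym : ∀ i j, R i j = R j i) (hRnn : ∀ i j, 0 ≤ R i j)
    (τ : ℝ≥0∞) (hτ : 0 < τ)
    (x v : Fin N → ℝ → EuclideanSpace ℝ (Fin d))
    (hsol : IsRCSSol N c κ₀ κ₁ κ₂ φ R τ x v) :
    ∀ t ∈ dom τ, ∑ i, what c (v i t) = ∑ i, what c (v i 0) := by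
  intro t ht
  rcases ht with ⟨ht0, htτ⟩
  rcases eq_or_lt_of_le ht0 with h0 | h0
  · rw [← h0]
  have hmem : ∀ s ∈ Set.Icc (0 : ℝ) t, s ∈ dom τ := by
    intro s hs
    exact ⟨hs.1, lt_of_le_of_lt (ENNReal.ofReal_le_ofReal hs.2) htτ⟩
  have hderiv : ∀ s ∈ Set.Icc (0 : ℝ) t,
      HasDerivAt (fun u => ∑ i, what c (v i u)) 0 s := by
    intro s hs
    have hsd := hsol s (hmem s hs)
    have hd' : HasDerivAt (fun u => ∑ i, what c (v i u))
        (∑ i, rcsForce N κ₀ κ₁ κ₂ φ R (fun k => x k s) (fun k => v k s) i) s :=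
      HasDerivAt.fun_sum (fun i _ => hsd.2.2.2 i)
    rwa [rcsForce_sum_zero N κ₀ κ₁ κ₂ φ R hRsym] at hd'
  have hc' : ContinuousOn (fun u => ∑ i, what c (v i u)) (Set.Icc 0 t) :=
    fun s hs => ((hderiv s hs).continuousAt).continuousWithinAt
  have := constant_of_has_deriv_right_zero hc'
    (fun s hs => ((hderiv s (Set.mem_Icc_of_Ico hs)).hasDerivWithinAt))
    t (Set.right_mem_Icc.mpr (le_of_lt h0))
  exact this
end
end

section
/- (Comparability of relative velocity and relative momentum) For every c > 0 and every U_w > 0 there exists a constant C_L ∈ (0,1), depending only on U_w and c, such that for all v₁, v₂ ∈ ℝ^d with |v₁| < c, |v₂| < c, |ŵ(v₁)| ≤ U_w and |ŵ(v₂)| ≤ U_w, one has (i) C_L·|ŵ(v₁) − ŵ(v₂)| ≤ |v₁ − v₂| ≤ |ŵ(v₁) − ŵ(v₂)|, and (ii) C_L²·|ŵ(v₁) − ŵ(v₂)|² ≤ ⟨ŵ(v₁) − ŵ(v₂), v₁ − v₂⟩ ≤ |ŵ(v₁) − ŵ(v₂)|². -/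
noncomputable section

section Helpers

variable {d : ℕ} {c Uw : ℝ}

lemma A_pos (hc : 0 < c) {v : EuclideanSpace ℝ (Fin d)} (hv : ‖v‖ < c) :
    0 < 1 - ‖v‖ ^ 2 / c ^ 2 := by
  have h : ‖v‖ ^ 2 < c ^ 2 := by nlinarith [norm_nonneg v]
  have : ‖v‖ ^ 2 / c ^ 2 < 1 := (div_lt_one (by positivity)).2 h
  linarith

lemma sqrtA_le_one (hc : 0 < c) {v : EuclideanSpace ℝ (Fin d)} (hv : ‖v‖ < c) :
    Real.sqrt (1 - ‖v‖ ^ 2 / c ^ 2) ≤ 1 := by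
  have : 0 ≤ ‖v‖ ^ 2 / c ^ 2 := by positivity
  calc Real.sqrt (1 - ‖v‖ ^ 2 / c ^ 2) ≤ Real.sqrt 1 := Real.sqrt_le_sqrt (by linarith)
    _ = 1 := Real.sqrt_one

lemma lorentz_ge_one (hc : 0 < c) {v : EuclideanSpace ℝ (Fin d)} (hv : ‖v‖ < c) :
    1 ≤ lorentz c v := by
  have hA := A_pos hc hv
  have h1 := sqrtA_le_one hc hv
  have h0 : 0 < Real.sqrt (1 - ‖v‖ ^ 2 / c ^ 2) := Real.sqrt_pos.2 hA
  rw [lorentz, le_div_iff₀ h0, one_mul]; exact h1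

lemma lorentz_pos (hc : 0 < c) {v : EuclideanSpace ℝ (Fin d)} (hv : ‖v‖ < c) :
    0 < lorentz c v := lt_of_lt_of_le one_pos (lorentz_ge_one hc hv)

lemma Fmap_ge_one (hc : 0 < c) {v : EuclideanSpace ℝ (Fin d)} (hv : ‖v‖ < c) :
    1 ≤ Fmap c v := by
  have h1 := lorentz_ge_one hc hv
  have hc2 : 0 < c ^ 2 := by positivity
  have : 0 < lorentz c v / c ^ 2 := by positivity
  rw [Fmap]; nlinarith

lemma Fmap_pos (hc : 0 < c) {v : EuclideanSpace ℝ (Fin d)} (hv : ‖v‖ < c) :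
    0 < Fmap c v := lt_of_lt_of_le one_pos (Fmap_ge_one hc hv)

lemma norm_what (hc : 0 < c) {v : EuclideanSpace ℝ (Fin d)} (hv : ‖v‖ < c) :
    ‖what c v‖ = Fmap c v * ‖v‖ := by
  rw [what, norm_smul, Real.norm_eq_abs, abs_of_pos (Fmap_pos hc hv)]

lemma norm_le_norm_what (hc : 0 < c) {v : EuclideanSpace ℝ (Fin d)} (hv : ‖v‖ < c) :
    ‖v‖ ≤ ‖what c v‖ := by
  rw [norm_what hc hv]
  nlinarith [Fmap_ge_one hc hv, norm_nonneg v]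

/-- lower bound on A under momentum bound -/
lemma A_ge (hc : 0 < c) (hUw : 0 < Uw) {v : EuclideanSpace ℝ (Fin d)} (hv : ‖v‖ < c)
    (hw : ‖what c v‖ ≤ Uw) :
    c ^ 2 / (c ^ 2 + Uw ^ 2) ≤ 1 - ‖v‖ ^ 2 / c ^ 2 := by
  have hA := A_pos hc hv
  have hs0 : 0 < Real.sqrt (1 - ‖v‖ ^ 2 / c ^ 2) := Real.sqrt_pos.2 hA
  have hΓ : lorentz c v * ‖v‖ ≤ Uw := by
    calc lorentz c v * ‖v‖ ≤ Fmap c v * ‖v‖ := by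
          have h1 := lorentz_pos hc hv
          have : 0 < lorentz c v / c ^ 2 := by positivity
          have hF : lorentz c v ≤ Fmap c v := by rw [Fmap]; nlinarith
          nlinarith [norm_nonneg v]
      _ = ‖what c v‖ := (norm_what hc hv).symm
      _ ≤ Uw := hw
  -- ‖v‖ / √A ≤ Uw  ⟹ ‖v‖ ≤ Uw √A ⟹ ‖v‖² ≤ Uw² A
  have h2 : ‖v‖ ≤ Uw * Real.sqrt (1 - ‖v‖ ^ 2 / c ^ 2) := by
    rw [lorentz, div_mul_eq_mul_div, one_mul, div_le_iff₀ hs0] at hΓ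
    linarith [hΓ]
  have h3 : ‖v‖ ^ 2 ≤ Uw ^ 2 * (1 - ‖v‖ ^ 2 / c ^ 2) := by
    have := Real.sq_sqrt hA.le
    nlinarith [norm_nonneg v, Real.sqrt_nonneg (1 - ‖v‖ ^ 2 / c ^ 2)]
  rw [div_le_iff₀ (by positivity)]
  have hc2 : (0:ℝ) < c ^ 2 := by positivity
  have h4 : c ^ 2 * ‖v‖ ^ 2 ≤ Uw ^ 2 * (c ^ 2 - ‖v‖ ^ 2) := by
    have := mul_le_mul_of_nonneg_left h3 hc2.le
    calc c ^ 2 * ‖v‖ ^ 2 ≤ c ^ 2 * (Uw ^ 2 * (1 - ‖v‖ ^ 2 / c ^ 2)) := this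
      _ = Uw ^ 2 * (c ^ 2 - ‖v‖ ^ 2) := by field_simp
  have : (1 - ‖v‖ ^ 2 / c ^ 2) * c ^ 2 = c ^ 2 - ‖v‖ ^ 2 := by field_simp
  nlinarith
lemma lorentz_mono (hc : 0 < c) {v w : EuclideanSpace ℝ (Fin d)} (hv : ‖v‖ < c)
    (hw : ‖w‖ < c) (h : ‖w‖ ≤ ‖v‖) : lorentz c w ≤ lorentz c v := by
  have hAv := A_pos hc hv
  have hle : 1 - ‖v‖ ^ 2 / c ^ 2 ≤ 1 - ‖w‖ ^ 2 / c ^ 2 := by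
    have h2 : ‖w‖ ^ 2 ≤ ‖v‖ ^ 2 := by nlinarith [norm_nonneg w]
    have hc2 : (0:ℝ) < c ^ 2 := by positivity
    have : ‖w‖ ^ 2 / c ^ 2 ≤ ‖v‖ ^ 2 / c ^ 2 := by gcongr
    linarith
  have hs : Real.sqrt (1 - ‖v‖ ^ 2 / c ^ 2) ≤ Real.sqrt (1 - ‖w‖ ^ 2 / c ^ 2) :=
    Real.sqrt_le_sqrt hle
  have h0 : 0 < Real.sqrt (1 - ‖v‖ ^ 2 / c ^ 2) := Real.sqrt_pos.2 hAv
  rw [lorentz, lorentz]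
  exact one_div_le_one_div_of_le h0 hs

lemma Fmap_mono (hc : 0 < c) {v w : EuclideanSpace ℝ (Fin d)} (hv : ‖v‖ < c)
    (hw : ‖w‖ < c) (h : ‖w‖ ≤ ‖v‖) : Fmap c w ≤ Fmap c v := by
  have h1 := lorentz_mono hc hv hw h
  have h2 := lorentz_pos hc hw
  have hc2 : (0:ℝ) < c ^ 2 := by positivity
  have h3 : lorentz c w * lorentz c w ≤ lorentz c v * lorentz c v := by nlinarith
  have h4 : lorentz c w * lorentz c w / c ^ 2 ≤ lorentz c v * lorentz c v / c ^ 2 := by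
    gcongr
  have e : ∀ t : ℝ, t * (1 + t / c ^ 2) = t + t * t / c ^ 2 := fun t => by ring
  rw [Fmap, Fmap, e, e]
  linarith

lemma inner_what_expand (hc : 0 < c) (v₁ v₂ : EuclideanSpace ℝ (Fin d)) :
    (inner ℝ (what c v₁ - what c v₂) (v₁ - v₂) : ℝ)
      = Fmap c v₁ * inner ℝ v₁ (v₁ - v₂) - Fmap c v₂ * inner ℝ v₂ (v₁ - v₂) := by
  rw [what, what, inner_sub_left, real_inner_smul_left, real_inner_smul_left]

lemma mono_aux (hc : 0 < c) {v₁ v₂ : EuclideanSpace ℝ (Fin d)} (h1 : ‖v₁‖ < c)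
    (h2 : ‖v₂‖ < c) (h : ‖v₂‖ ≤ ‖v₁‖) :
    ‖v₁ - v₂‖ ^ 2 ≤ (inner ℝ (what c v₁ - what c v₂) (v₁ - v₂) : ℝ) := by
  rw [inner_what_expand hc]
  have hF : Fmap c v₂ ≤ Fmap c v₁ := Fmap_mono hc h1 h2 h
  have hF2 : 1 ≤ Fmap c v₂ := Fmap_ge_one hc h2
  have e1 : (inner ℝ v₁ (v₁ - v₂) : ℝ) = ‖v₁‖ ^ 2 - inner ℝ v₁ v₂ := by
    rw [inner_sub_right, real_inner_self_eq_norm_sq]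
  have e2 : (inner ℝ v₂ (v₁ - v₂) : ℝ) = inner ℝ v₂ v₁ - ‖v₂‖ ^ 2 := by
    rw [inner_sub_right, real_inner_self_eq_norm_sq]
  have ecomm : (inner ℝ v₂ v₁ : ℝ) = inner ℝ v₁ v₂ := real_inner_comm v₁ v₂
  have hCS : (inner ℝ v₁ v₂ : ℝ) ≤ ‖v₁‖ * ‖v₂‖ := real_inner_le_norm v₁ v₂
  have hnn : 0 ≤ (‖v₁‖ ^ 2 - inner ℝ v₁ v₂ : ℝ) := by nlinarith [norm_nonneg v₂]
  have hns : ‖v₁ - v₂‖ ^ 2 = ‖v₁‖ ^ 2 - 2 * inner ℝ v₁ v₂ + ‖v₂‖ ^ 2 :=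
    norm_sub_sq_real v₁ v₂
  rw [e1, e2, ecomm, hns]
  nlinarith

lemma mono (hc : 0 < c) {v₁ v₂ : EuclideanSpace ℝ (Fin d)} (h1 : ‖v₁‖ < c)
    (h2 : ‖v₂‖ < c) :
    ‖v₁ - v₂‖ ^ 2 ≤ (inner ℝ (what c v₁ - what c v₂) (v₁ - v₂) : ℝ) := by
  rcases le_total ‖v₂‖ ‖v₁‖ with h | h
  · exact mono_aux hc h1 h2 h
  · have := mono_aux hc h2 h1 h
    have e : (inner ℝ (what c v₂ - what c v₁) (v₂ - v₁) : ℝ)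
        = inner ℝ (what c v₁ - what c v₂) (v₁ - v₂) := by
      rw [show what c v₂ - what c v₁ = -(what c v₁ - what c v₂) by abel,
        show v₂ - v₁ = -(v₁ - v₂) by abel, inner_neg_neg]
    rw [norm_sub_rev, ← e]
    exact this
lemma recip_diff_bound {a b m : ℝ} (hm : 0 < m) (ha : m ≤ a) (hb : m ≤ b) :
    |1 / a - 1 / b| ≤ |b ^ 2 - a ^ 2| / (2 * m ^ 3) := by
  have ha0 : 0 < a := hm.trans_le ha
  have hb0 : 0 < b := hm.trans_le hb
  have key : 1 / a - 1 / b = (b ^ 2 - a ^ 2) / (a * b * (a + b)) := by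
    field_simp; ring
  rw [key, abs_div, abs_of_pos (by positivity : (0:ℝ) < a * b * (a + b))]
  apply div_le_div_of_nonneg_left (abs_nonneg _) (by positivity)
  have hab : m * m ≤ a * b := mul_le_mul ha hb hm.le ha0.le
  have hsum : 2 * m ≤ a + b := by linarith
  have := mul_le_mul hab hsum (by positivity) (by positivity : (0:ℝ) ≤ a * b)
  nlinarith

lemma lorentz_le (hc : 0 < c) (hUw : 0 < Uw) {v : EuclideanSpace ℝ (Fin d)}
    (hv : ‖v‖ < c) (hw : ‖what c v‖ ≤ Uw) :
    lorentz c v ≤ 1 / Real.sqrt (c ^ 2 / (c ^ 2 + Uw ^ 2)) := by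
  have hδ : (0:ℝ) < c ^ 2 / (c ^ 2 + Uw ^ 2) := by positivity
  have hA := A_ge hc hUw hv hw
  have hs : Real.sqrt (c ^ 2 / (c ^ 2 + Uw ^ 2)) ≤ Real.sqrt (1 - ‖v‖ ^ 2 / c ^ 2) :=
    Real.sqrt_le_sqrt hA
  have h0 : 0 < Real.sqrt (c ^ 2 / (c ^ 2 + Uw ^ 2)) := Real.sqrt_pos.2 hδ
  rw [lorentz]
  exact one_div_le_one_div_of_le h0 hs

lemma lorentz_diff_bound (hc : 0 < c) (hUw : 0 < Uw) {v₁ v₂ : EuclideanSpace ℝ (Fin d)}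
    (h1 : ‖v₁‖ < c) (h2 : ‖v₂‖ < c) (hw1 : ‖what c v₁‖ ≤ Uw) (hw2 : ‖what c v₂‖ ≤ Uw) :
    |lorentz c v₁ - lorentz c v₂|
      ≤ ‖v₁ - v₂‖ / (c * Real.sqrt (c ^ 2 / (c ^ 2 + Uw ^ 2)) ^ 3) := by
  set δ : ℝ := c ^ 2 / (c ^ 2 + Uw ^ 2) with hδdef
  have hδ : (0:ℝ) < δ := by positivity
  set m : ℝ := Real.sqrt δ with hmdef
  have hm : 0 < m := Real.sqrt_pos.2 hδ
  have hA1 := A_pos hc h1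
  have hA2 := A_pos hc h2
  have ha : m ≤ Real.sqrt (1 - ‖v₁‖ ^ 2 / c ^ 2) := Real.sqrt_le_sqrt (A_ge hc hUw h1 hw1)
  have hb : m ≤ Real.sqrt (1 - ‖v₂‖ ^ 2 / c ^ 2) := Real.sqrt_le_sqrt (A_ge hc hUw h2 hw2)
  have hrec := recip_diff_bound hm ha hb
  have e1 : Real.sqrt (1 - ‖v₁‖ ^ 2 / c ^ 2) ^ 2 = 1 - ‖v₁‖ ^ 2 / c ^ 2 :=
    Real.sq_sqrt hA1.le
  have e2 : Real.sqrt (1 - ‖v₂‖ ^ 2 / c ^ 2) ^ 2 = 1 - ‖v₂‖ ^ 2 / c ^ 2 :=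
    Real.sq_sqrt hA2.le
  rw [e2, e1] at hrec
  rw [lorentz, lorentz]
  refine hrec.trans ?_
  -- |(1 - s₂²/c²) - (1 - s₁²/c²)| = |s₁² - s₂²|/c² ≤ 2‖v₁-v₂‖/c
  have hdiff : |(1 - ‖v₂‖ ^ 2 / c ^ 2) - (1 - ‖v₁‖ ^ 2 / c ^ 2)|
      ≤ 2 * ‖v₁ - v₂‖ / c := by
    have e : (1 - ‖v₂‖ ^ 2 / c ^ 2) - (1 - ‖v₁‖ ^ 2 / c ^ 2)
        = (‖v₁‖ - ‖v₂‖) * (‖v₁‖ + ‖v₂‖) / c ^ 2 := by field_simp; ring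
    rw [e, abs_div, abs_of_pos (by positivity : (0:ℝ) < c ^ 2), abs_mul]
    have hsub : |‖v₁‖ - ‖v₂‖| ≤ ‖v₁ - v₂‖ := abs_norm_sub_norm_le v₁ v₂
    have hsum : |‖v₁‖ + ‖v₂‖| ≤ 2 * c := by
      rw [abs_of_nonneg (by positivity)]; linarith
    rw [div_le_div_iff₀ (by positivity) hc]
    calc |‖v₁‖ - ‖v₂‖| * |‖v₁‖ + ‖v₂‖| * c ≤ ‖v₁ - v₂‖ * (2 * c) * c := by
          apply mul_le_mul_of_nonneg_right _ hc.le
          exact mul_le_mul hsub hsum (abs_nonneg _) (norm_nonneg _)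
      _ = 2 * ‖v₁ - v₂‖ * c ^ 2 := by ring
  calc |(1 - ‖v₂‖ ^ 2 / c ^ 2) - (1 - ‖v₁‖ ^ 2 / c ^ 2)| / (2 * m ^ 3)
      ≤ (2 * ‖v₁ - v₂‖ / c) / (2 * m ^ 3) := by gcongr
    _ = ‖v₁ - v₂‖ / (c * m ^ 3) := by field_simp

lemma Fmap_diff_bound (hc : 0 < c) (hUw : 0 < Uw) {v₁ v₂ : EuclideanSpace ℝ (Fin d)}
    (h1 : ‖v₁‖ < c) (h2 : ‖v₂‖ < c) (hw1 : ‖what c v₁‖ ≤ Uw) (hw2 : ‖what c v₂‖ ≤ Uw) :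
    |Fmap c v₁ - Fmap c v₂|
      ≤ |lorentz c v₁ - lorentz c v₂|
        * (1 + 2 * (1 / Real.sqrt (c ^ 2 / (c ^ 2 + Uw ^ 2))) / c ^ 2) := by
  have e : Fmap c v₁ - Fmap c v₂
      = (lorentz c v₁ - lorentz c v₂) * (1 + (lorentz c v₁ + lorentz c v₂) / c ^ 2) := by
    rw [Fmap, Fmap]; field_simp; ring
  rw [e, abs_mul]
  gcongr
  have hγ1 := lorentz_le hc hUw h1 hw1
  have hγ2 := lorentz_le hc hUw h2 hw2
  have hp1 := lorentz_pos hc h1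
  have hp2 := lorentz_pos hc h2
  have hc2 : (0:ℝ) < c ^ 2 := by positivity
  rw [abs_of_pos (by positivity)]
  have : (lorentz c v₁ + lorentz c v₂) / c ^ 2
      ≤ 2 * (1 / Real.sqrt (c ^ 2 / (c ^ 2 + Uw ^ 2))) / c ^ 2 := by
    gcongr ?_ / _
    linarith
  linarith

lemma what_diff_bound (hc : 0 < c) (hUw : 0 < Uw) {v₁ v₂ : EuclideanSpace ℝ (Fin d)}
    (h1 : ‖v₁‖ < c) (h2 : ‖v₂‖ < c) (hw1 : ‖what c v₁‖ ≤ Uw) (hw2 : ‖what c v₂‖ ≤ Uw) :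
    ‖what c v₁ - what c v₂‖
      ≤ Fmap c v₁ * ‖v₁ - v₂‖ + |Fmap c v₁ - Fmap c v₂| * Uw := by
  have e : what c v₁ - what c v₂
      = Fmap c v₁ • (v₁ - v₂) + (Fmap c v₁ - Fmap c v₂) • v₂ := by
    rw [what, what, smul_sub, sub_smul]; abel
  rw [e]
  refine (norm_add_le _ _).trans ?_
  rw [norm_smul, norm_smul, Real.norm_eq_abs, Real.norm_eq_abs,
    abs_of_pos (Fmap_pos hc h1)]
  gcongr
  exact (norm_le_norm_what hc h2).trans hw2
lemma Fmap_le (hc : 0 < c) (hUw : 0 < Uw) {v : EuclideanSpace ℝ (Fin d)}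
    (hv : ‖v‖ < c) (hw : ‖what c v‖ ≤ Uw) :
    Fmap c v ≤ (1 / Real.sqrt (c ^ 2 / (c ^ 2 + Uw ^ 2)))
      * (1 + (1 / Real.sqrt (c ^ 2 / (c ^ 2 + Uw ^ 2))) / c ^ 2) := by
  set γm := 1 / Real.sqrt (c ^ 2 / (c ^ 2 + Uw ^ 2)) with hγdef
  have hγ0 : 0 < γm := by positivity
  have hγ := lorentz_le hc hUw hv hw
  have hp := lorentz_pos hc hv
  have hc2 : (0:ℝ) < c ^ 2 := by positivity
  rw [Fmap]
  have e : ∀ t : ℝ, t * (1 + t / c ^ 2) = t + t * t / c ^ 2 := fun t => by ring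
  rw [e, e]
  have h4 : lorentz c v * lorentz c v / c ^ 2 ≤ γm * γm / c ^ 2 := by
    gcongr
  linarith

end Helpers

/-- Comparability of relative velocity and relative momentum: for every `c > 0` and
`U_w > 0` there is `C_L ∈ (0,1)`, depending only on `c` and `U_w`, such that for all
subluminal velocities `v₁, v₂` with momenta bounded by `U_w`:
`C_L|ŵ(v₁)−ŵ(v₂)| ≤ |v₁−v₂| ≤ |ŵ(v₁)−ŵ(v₂)|` and
`C_L²|ŵ(v₁)−ŵ(v₂)|² ≤ ⟨ŵ(v₁)−ŵ(v₂), v₁−v₂⟩ ≤ |ŵ(v₁)−ŵ(v₂)|²`. -/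
theorem velocity_momentum_comparability (d : ℕ) (hd : 1 ≤ d)
    (c : ℝ) (hc : 0 < c) (Uw : ℝ) (hUw : 0 < Uw) :
    ∃ CL : ℝ, 0 < CL ∧ CL < 1 ∧
      ∀ v₁ v₂ : EuclideanSpace ℝ (Fin d), ‖v₁‖ < c → ‖v₂‖ < c →
        ‖what c v₁‖ ≤ Uw → ‖what c v₂‖ ≤ Uw →
          (CL * ‖what c v₁ - what c v₂‖ ≤ ‖v₁ - v₂‖ ∧
            ‖v₁ - v₂‖ ≤ ‖what c v₁ - what c v₂‖) ∧
          (CL ^ 2 * ‖what c v₁ - what c v₂‖ ^ 2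
              ≤ (inner ℝ (what c v₁ - what c v₂) (v₁ - v₂) : ℝ) ∧
            (inner ℝ (what c v₁ - what c v₂) (v₁ - v₂) : ℝ)
              ≤ ‖what c v₁ - what c v₂‖ ^ 2) := by
  set γm : ℝ := 1 / Real.sqrt (c ^ 2 / (c ^ 2 + Uw ^ 2)) with hγdef
  have hγ0 : 0 < γm := by positivity
  set L : ℝ := γm * (1 + γm / c ^ 2)
      + (1 + 2 * γm / c ^ 2) / (c * Real.sqrt (c ^ 2 / (c ^ 2 + Uw ^ 2)) ^ 3) * Uw
      with hLdef
  have hsδ : 0 < Real.sqrt (c ^ 2 / (c ^ 2 + Uw ^ 2)) := Real.sqrt_pos.2 (by positivity)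
  have hL0 : 0 < L := by
    have t1 : 0 < γm * (1 + γm / c ^ 2) := by positivity
    have t2 : 0 < (1 + 2 * γm / c ^ 2)
        / (c * Real.sqrt (c ^ 2 / (c ^ 2 + Uw ^ 2)) ^ 3) * Uw := by positivity
    rw [hLdef]; linarith
  refine ⟨1 / (L + 1), by positivity, by rw [div_lt_one (by linarith)]; linarith, ?_⟩
  intro v₁ v₂ h1 h2 hw1 hw2
  have hlip : ‖what c v₁ - what c v₂‖ ≤ L * ‖v₁ - v₂‖ := by
    have step1 := what_diff_bound hc hUw h1 h2 hw1 hw2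
    have step2 := Fmap_diff_bound hc hUw h1 h2 hw1 hw2
    have step3 := lorentz_diff_bound hc hUw h1 h2 hw1 hw2
    have hF1 := Fmap_le hc hUw h1 hw1
    have hγpos : (0:ℝ) < 1 + 2 * γm / c ^ 2 := by positivity
    have hΔF : |Fmap c v₁ - Fmap c v₂|
        ≤ ‖v₁ - v₂‖ / (c * Real.sqrt (c ^ 2 / (c ^ 2 + Uw ^ 2)) ^ 3)
          * (1 + 2 * γm / c ^ 2) := by
      refine step2.trans ?_
      exact mul_le_mul_of_nonneg_right step3 hγpos.le
    calc ‖what c v₁ - what c v₂‖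
        ≤ Fmap c v₁ * ‖v₁ - v₂‖ + |Fmap c v₁ - Fmap c v₂| * Uw := step1
      _ ≤ γm * (1 + γm / c ^ 2) * ‖v₁ - v₂‖
          + (‖v₁ - v₂‖ / (c * Real.sqrt (c ^ 2 / (c ^ 2 + Uw ^ 2)) ^ 3)
            * (1 + 2 * γm / c ^ 2)) * Uw := by
          gcongr
      _ = L * ‖v₁ - v₂‖ := by rw [hLdef]; ring
  have hmono := mono hc h1 h2
  have hcs := real_inner_le_norm (what c v₁ - what c v₂) (v₁ - v₂)
  have hnv : (0:ℝ) ≤ ‖v₁ - v₂‖ := norm_nonneg _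
  have hnw : (0:ℝ) ≤ ‖what c v₁ - what c v₂‖ := norm_nonneg _
  have hright : ‖v₁ - v₂‖ ≤ ‖what c v₁ - what c v₂‖ := by
    rcases hnv.eq_or_lt' with h | h
    · rw [h]; exact hnw
    · have : ‖v₁ - v₂‖ * ‖v₁ - v₂‖ ≤ ‖what c v₁ - what c v₂‖ * ‖v₁ - v₂‖ := by
        nlinarith
      exact le_of_mul_le_mul_right this h
  have hCLL : (1 / (L + 1)) * L ≤ 1 := by
    rw [div_mul_eq_mul_div, one_mul, div_le_one (by linarith)]; linarith
  have hleft : (1 / (L + 1)) * ‖what c v₁ - what c v₂‖ ≤ ‖v₁ - v₂‖ := by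
    have hCL0 : (0:ℝ) < 1 / (L + 1) := by positivity
    calc (1 / (L + 1)) * ‖what c v₁ - what c v₂‖
        ≤ (1 / (L + 1)) * (L * ‖v₁ - v₂‖) := by gcongr
      _ = ((1 / (L + 1)) * L) * ‖v₁ - v₂‖ := by ring
      _ ≤ 1 * ‖v₁ - v₂‖ := by gcongr
      _ = ‖v₁ - v₂‖ := one_mul _
  refine ⟨⟨hleft, hright⟩, ?_, ?_⟩
  · have hsq : ((1 / (L + 1)) * ‖what c v₁ - what c v₂‖) ^ 2 ≤ ‖v₁ - v₂‖ ^ 2 := by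
      have h0 : (0:ℝ) ≤ (1 / (L + 1)) * ‖what c v₁ - what c v₂‖ := by positivity
      nlinarith
    calc (1 / (L + 1)) ^ 2 * ‖what c v₁ - what c v₂‖ ^ 2
        = ((1 / (L + 1)) * ‖what c v₁ - what c v₂‖) ^ 2 := by ring
      _ ≤ ‖v₁ - v₂‖ ^ 2 := hsq
      _ ≤ _ := hmono
  · calc (inner ℝ (what c v₁ - what c v₂) (v₁ - v₂) : ℝ)
        ≤ ‖what c v₁ - what c v₂‖ * ‖v₁ - v₂‖ := hcs
      _ ≤ ‖what c v₁ - what c v₂‖ * ‖what c v₁ - what c v₂‖ := by gcongr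
      _ = ‖what c v₁ - what c v₂‖ ^ 2 := by ring
end
end

section
/- (Kinetic energy identity) Let c > 0, let I ⊆ ℝ be an interval, and let v : I → ℝ^d be a C¹ curve with |v(t)| < c for all t ∈ I. Set w(t) := F(v(t))v(t). Then for all t ∈ I, ⟨v(t), w'(t)⟩ = d/dt [ c²(Γ(v(t)) − 1) + Γ(v(t))² − log Γ(v(t)) ]. -/
noncomputable section

/-- Kinetic energy identity: if `v` is a C¹ curve on an interval `I` with `|v(t)| < c`,
`w(t) = F(v(t))v(t)` and `w'(t) = W(t)` on `I`, then
`⟨v(t), w'(t)⟩ = d/dt [c²(Γ(v(t)) − 1) + Γ(v(t))² − log Γ(v(t))]` on `I`. -/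
theorem kinetic_energy_identity (d : ℕ) (hd : 1 ≤ d) (c : ℝ) (hc : 0 < c)
    (I : Set ℝ) (hI : I.OrdConnected)
    (v v' W : ℝ → EuclideanSpace ℝ (Fin d))
    (hv : ∀ t ∈ I, HasDerivAt v (v' t) t)
    (hvc : ∀ t ∈ I, ‖v t‖ < c)
    (hW : ∀ t ∈ I, HasDerivAt (fun s => what c (v s)) (W t) t) :
    ∀ t ∈ I,
      HasDerivAt
        (fun s => c ^ 2 * (lorentz c (v s) - 1)
          + (lorentz c (v s) ^ 2 - Real.log (lorentz c (v s))))
        ((inner ℝ (v t) (W t) : ℝ)) t := by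
  intro t ht
  have hvt := hv t ht
  have hVc := hvc t ht
  set V := v t with hV
  set V' := v' t with hV'
  set p : ℝ := inner ℝ V V' with hp
  set n : ℝ := ‖V‖ ^ 2 with hn
  have hq : (0:ℝ) < 1 - n / c ^ 2 := by
    have h1 : n < c ^ 2 := by
      have := norm_nonneg V
      nlinarith
    have : n / c ^ 2 < 1 := (div_lt_one (by positivity)).mpr h1
    linarith
  set s : ℝ := Real.sqrt (1 - n / c ^ 2) with hs
  have hsq : 0 < s := Real.sqrt_pos.mpr hq
  set γ : ℝ := lorentz c V with hγ
  have hγval : γ = s⁻¹ := by rw [hγ, lorentz, one_div, ← hn, ← hs]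
  have hγpos : 0 < γ := by rw [hγval]; positivity
  have hγsq : γ ^ 2 * c ^ 2 - γ ^ 2 * n = c ^ 2 := by
    have h2 : s ^ 2 = 1 - n / c ^ 2 := Real.sq_sqrt hq.le
    have : γ ^ 2 * (1 - n / c ^ 2) = 1 := by
      rw [hγval, inv_pow, h2]
      exact inv_mul_cancel₀ hq.ne'
    have hc2 : (c:ℝ) ^ 2 ≠ 0 := by positivity
    field_simp at this
    linarith
  -- derivative of ‖v s‖²
  have hnD : HasDerivAt (fun s => ‖v s‖ ^ 2) (2 * p) t := by
    have h := hvt.inner ℝ hvt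
    have he : ∀ s, (inner ℝ (v s) (v s) : ℝ) = ‖v s‖ ^ 2 := fun s =>
      real_inner_self_eq_norm_sq (v s)
    simp only [he] at h
    refine h.congr_deriv ?_
    rw [hp, real_inner_comm]
    ring
  -- derivative of lorentz ∘ v
  set γd : ℝ := γ ^ 3 * p / c ^ 2 with hγd
  have hfD : HasDerivAt (fun s => 1 - ‖v s‖ ^ 2 / c ^ 2) (-(2 * p) / c ^ 2) t := by
    have := (hnD.div_const (c ^ 2)).const_sub 1
    refine this.congr_deriv ?_
    ring
  have hfval : 1 - ‖v t‖ ^ 2 / c ^ 2 = 1 - n / c ^ 2 := rfl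
  have hsqrtD : HasDerivAt (fun s => Real.sqrt (1 - ‖v s‖ ^ 2 / c ^ 2))
      (-(2 * p) / c ^ 2 / (2 * s)) t := by
    have h := hfD.sqrt (by rw [hfval]; exact hq.ne')
    rw [hfval, ← hs] at h
    exact h
  have hGD : HasDerivAt (fun s => lorentz c (v s)) γd t := by
    have h := hsqrtD.inv (by rw [hfval, ← hs]; exact hsq.ne')
    have heq : (fun s => Real.sqrt (1 - ‖v s‖ ^ 2 / c ^ 2))⁻¹
        = fun s => lorentz c (v s) := by
      funext s; rw [Pi.inv_apply, lorentz, one_div]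
    rw [heq, hfval, ← hs] at h
    refine h.congr_deriv ?_
    rw [hγd, hγval]
    field_simp
  -- derivative of Fmap ∘ v
  set Fd : ℝ := γd * (1 + 2 * γ / c ^ 2) with hFd
  have hFD : HasDerivAt (fun s => Fmap c (v s)) Fd t := by
    unfold Fmap
    have h := hGD.mul ((hGD.div_const (c ^ 2)).const_add 1)
    refine h.congr_deriv ?_
    rw [hFd, show lorentz c (v t) = γ from rfl]
    ring
  -- derivative of what ∘ v, identify W t
  have hwD : HasDerivAt (fun s => what c (v s)) (Fmap c V • V' + Fd • V) t := by
    unfold what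
    exact hFD.smul hvt
  have hWt : W t = Fmap c V • V' + Fd • V := (hW t ht).unique hwD
  -- the inner product value
  have hval : (inner ℝ V (W t) : ℝ) = Fmap c V * p + Fd * n := by
    rw [hWt, inner_add_right, real_inner_smul_right, real_inner_smul_right, ← hp,
      real_inner_self_eq_norm_sq, ← hn]
  -- derivative of the energy expression
  have hED : HasDerivAt
      (fun s => c ^ 2 * (lorentz c (v s) - 1)
        + (lorentz c (v s) ^ 2 - Real.log (lorentz c (v s))))
      (c ^ 2 * γd + (2 * γ * γd - γd / γ)) t := by
    have h1 := (hGD.sub_const 1).const_mul (c ^ 2)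
    have h2 := hGD.pow 2
    have h3 := hGD.log (show lorentz c (v t) ≠ 0 from hγpos.ne')
    have h := h1.add (h2.sub h3)
    refine h.congr_deriv ?_
    rw [show lorentz c (v t) = γ from rfl]
    push_cast
    ring
  -- conclude
  have hfinal : (inner ℝ V (W t) : ℝ) = c ^ 2 * γd + (2 * γ * γd - γd / γ) := by
    have hc2 : (c : ℝ) ≠ 0 := hc.ne'
    have hγne : γ ≠ 0 := hγpos.ne'
    have hnval : n = (γ ^ 2 * c ^ 2 - c ^ 2) / γ ^ 2 := by
      field_simp
      linarith [hγsq]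
    rw [hval, Fmap, ← hγ, hγd, hFd, hγd, hnval]
    field_simp
    ring
  rw [hfinal]
  exact hED
end
end

section
/- (Uniform bounds on relative distances) Assume κ₂ > 0 and let {(x_i, v_i)}_{i=1}^N be a solution of the RCS model with bonding force on [0,τ). Then E(0) ≥ N, and for all i ≠ j and all t ∈ [0,τ): R^∞_{ij} − √(4N(E(0) − N)/κ₂) ≤ |x_i(t) − x_j(t)| ≤ R^∞_{ij} + √(4N(E(0) − N)/κ₂). In particular, min_{k≠l} R^∞_{kl} − √(4N(E(0) − N)/κ₂) ≤ |x_i(t) − x_j(t)| ≤ max_{k≠l} R^∞_{kl} + √(4N(E(0) − N)/κ₂). -/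
open scoped BigOperators ENNReal Topology
open Filter

noncomputable section

namespace RCS

variable {d : ℕ} {c : ℝ}

/-- scalar F -/
def Fs (c γ : ℝ) : ℝ := γ * (1 + γ / c ^ 2)
/-- ‖ŵ‖² as a function of γ -/
def Hfun (c γ : ℝ) : ℝ := c ^ 2 * (1 + γ / c ^ 2) ^ 2 * (γ ^ 2 - 1)
/-- derivative of Hfun -/
def Hder (c γ : ℝ) : ℝ := 2 * (1 + γ / c ^ 2) * (2 * γ ^ 2 + c ^ 2 * γ - 1)
/-- per-particle kinetic energy as a function of γ -/
def psi (c γ : ℝ) : ℝ := c ^ 2 * (γ - 1) + (γ ^ 2 - Real.log γ)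

lemma one_sub_pos (hc : 0 < c) {v : EuclideanSpace ℝ (Fin d)} (hv : ‖v‖ < c) :
    0 < 1 - ‖v‖ ^ 2 / c ^ 2 := by
  have h1 : ‖v‖ ^ 2 < c ^ 2 := by
    have := norm_nonneg v; nlinarith
  have h2 : (0:ℝ) < c ^ 2 := by positivity
  have : ‖v‖ ^ 2 / c ^ 2 < 1 := (div_lt_one h2).2 h1
  linarith

lemma one_le_lorentz (hc : 0 < c) {v : EuclideanSpace ℝ (Fin d)} (hv : ‖v‖ < c) :
    1 ≤ lorentz c v := by
  have h := one_sub_pos hc hv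
  have h1 : 1 - ‖v‖ ^ 2 / c ^ 2 ≤ 1 := by
    have : 0 ≤ ‖v‖ ^ 2 / c ^ 2 := by positivity
    linarith
  have hs : Real.sqrt (1 - ‖v‖ ^ 2 / c ^ 2) ≤ 1 := by
    simpa using Real.sqrt_le_sqrt h1
  have hs0 : 0 < Real.sqrt (1 - ‖v‖ ^ 2 / c ^ 2) := Real.sqrt_pos.2 h
  rw [lorentz, le_div_iff₀ hs0]
  linarith

lemma lorentz_sq (hc : 0 < c) {v : EuclideanSpace ℝ (Fin d)} (hv : ‖v‖ < c) :
    (lorentz c v) ^ 2 * (1 - ‖v‖ ^ 2 / c ^ 2) = 1 := by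
  have h := one_sub_pos hc hv
  rw [lorentz, div_pow, one_pow, Real.sq_sqrt h.le]
  field_simp
  rw [div_self]
  have hc2 : (0:ℝ) < c ^ 2 := by positivity
  have h3 : 0 < c ^ 2 - ‖v‖ ^ 2 := by
    have h4 : ‖v‖ ^ 2 / c ^ 2 < 1 := by linarith
    rw [div_lt_one hc2] at h4
    linarith
  positivity

lemma norm_sq_eq (hc : 0 < c) {v : EuclideanSpace ℝ (Fin d)} (hv : ‖v‖ < c) :
    ‖v‖ ^ 2 = c ^ 2 * (1 - ((lorentz c v) ^ 2)⁻¹) := by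
  have h := lorentz_sq hc hv
  have hγ : (1:ℝ) ≤ lorentz c v := one_le_lorentz hc hv
  have hγ0 : lorentz c v ≠ 0 := by nlinarith
  have hc2 : (c:ℝ) ^ 2 ≠ 0 := by positivity
  field_simp at h ⊢
  nlinarith [h]

lemma what_eq (c : ℝ) (v : EuclideanSpace ℝ (Fin d)) : what c v = Fs c (lorentz c v) • v := rfl

lemma norm_what_sq (hc : 0 < c) {v : EuclideanSpace ℝ (Fin d)} (hv : ‖v‖ < c) :
    ‖what c v‖ ^ 2 = Hfun c (lorentz c v) := by
  have h := norm_sq_eq hc hv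
  have hγ : (1:ℝ) ≤ lorentz c v := one_le_lorentz hc hv
  have hγ0 : lorentz c v ≠ 0 := by nlinarith
  rw [what_eq, norm_smul, mul_pow, Real.norm_eq_abs, sq_abs, Fs, Hfun, h]
  field_simp


lemma Hfun_hasStrictDerivAt (c γ : ℝ) (hc : 0 < c) :
    HasStrictDerivAt (Hfun c) (Hder c γ) γ := by
  have h1 : HasStrictDerivAt (fun γ : ℝ => 1 + γ / c ^ 2) (1 / c ^ 2) γ := by
    simpa using ((hasStrictDerivAt_id γ).div_const (c ^ 2)).const_add 1
  have h2 := (h1.mul h1).const_mul (c ^ 2)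
  have h3 := ((hasStrictDerivAt_id γ).mul (hasStrictDerivAt_id γ)).sub_const 1
  have h := h2.mul h3
  have hfe : Hfun c = fun γ : ℝ =>
      c ^ 2 * ((1 + γ / c ^ 2) * (1 + γ / c ^ 2)) * (id γ * id γ - 1) := by
    funext γ; simp [Hfun]; ring
  rw [hfe]
  refine h.congr_deriv ?_
  have hc2 : (c:ℝ) ^ 2 ≠ 0 := by positivity
  simp only [id, Pi.mul_apply, Hder]
  field_simp
  ring

lemma Hder_pos (hc : 0 < c) {γ : ℝ} (hγ : 3/4 ≤ γ) : 0 < Hder c γ := by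
  have h1 : (0:ℝ) < 1 + γ / c ^ 2 := by
    have : 0 ≤ γ / c ^ 2 := by positivity
    linarith
  have h2 : (0:ℝ) < 2 * γ ^ 2 + c ^ 2 * γ - 1 := by nlinarith [sq_nonneg c]
  have := mul_pos (mul_pos two_pos h1) h2
  simpa [Hder, mul_assoc] using this

lemma Hfun_strictMonoOn (hc : 0 < c) : StrictMonoOn (Hfun c) (Set.Ici (3/4 : ℝ)) := by
  refine strictMonoOn_of_deriv_pos (convex_Ici _) ?_ ?_
  · exact fun x _ => ((Hfun_hasStrictDerivAt c x hc).hasDerivAt).continuousAt.continuousWithinAt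
  · intro x hx
    rw [interior_Ici] at hx
    rw [(Hfun_hasStrictDerivAt c x hc).hasDerivAt.deriv]
    exact Hder_pos hc hx.le

/-- local inverse of Hfun near γ₀ ≥ 1 -/
lemma exists_local_inverse (hc : 0 < c) {γ₀ : ℝ} (hγ₀ : 1 ≤ γ₀) :
    ∃ g : ℝ → ℝ, ContinuousAt g (Hfun c γ₀) ∧ HasDerivAt g (Hder c γ₀)⁻¹ (Hfun c γ₀) ∧
      (∀ᶠ y in 𝓝 (Hfun c γ₀), Hfun c (g y) = y ∧ 3/4 < g y) := by
  have hH := Hfun_hasStrictDerivAt c γ₀ hc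
  have hH' : Hder c γ₀ ≠ 0 := (Hder_pos hc (by linarith)).ne'
  refine ⟨hH.localInverse (Hfun c) _ _ hH', ?_, ?_, ?_⟩
  · exact (hH.hasStrictFDerivAt_equiv hH').localInverse_continuousAt
  · exact (hH.to_localInverse hH').hasDerivAt
  · have h1 := (hH.hasStrictFDerivAt_equiv hH').eventually_right_inverse
    have h2 : Tendsto (hH.localInverse (Hfun c) _ _ hH') (𝓝 (Hfun c γ₀)) (𝓝 γ₀) :=
      (hH.hasStrictFDerivAt_equiv hH').localInverse_tendsto
    have h3 : ∀ᶠ y in 𝓝 (Hfun c γ₀), 3/4 < hH.localInverse (Hfun c) _ _ hH' y :=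
      h2 (Ioi_mem_nhds (by linarith))
    exact h1.and h3

lemma Hder_eq (c : ℝ) {γ : ℝ} (hγ : γ ≠ 0) :
    Hder c γ = 2 * (c ^ 2 + 2 * γ - γ⁻¹) * Fs c γ := by
  rw [Hder, Fs]
  field_simp
  ring

lemma Fs_pos (hc : 0 < c) {γ : ℝ} (hγ : 1 ≤ γ) : 0 < Fs c γ := by
  have : (0:ℝ) ≤ γ / c ^ 2 := by positivity
  have h1 : (0:ℝ) < 1 + γ / c ^ 2 := by linarith
  have : (0:ℝ) < γ := by linarith
  exact mul_pos this h1

lemma lorentz_eventuallyEq (hc : 0 < c) {v : ℝ → EuclideanSpace ℝ (Fin d)} {t₀ : ℝ}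
    {l : Filter ℝ} (hl : l ≤ 𝓝 t₀) (hv : ∀ᶠ s in l, ‖v s‖ < c) (hv₀ : ‖v t₀‖ < c)
    (hu : ContinuousAt (fun s => ‖what c (v s)‖ ^ 2) t₀) :
    ∃ g : ℝ → ℝ, ContinuousAt g (‖what c (v t₀)‖ ^ 2) ∧
      HasDerivAt g (Hder c (lorentz c (v t₀)))⁻¹ (‖what c (v t₀)‖ ^ 2) ∧
      ((fun s => lorentz c (v s)) =ᶠ[l] fun s => g (‖what c (v s)‖ ^ 2)) ∧
      lorentz c (v t₀) = g (‖what c (v t₀)‖ ^ 2) := by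
  set γ₀ := lorentz c (v t₀) with hγ₀def
  have hγ₀ : 1 ≤ γ₀ := one_le_lorentz hc hv₀
  have hbase : ‖what c (v t₀)‖ ^ 2 = Hfun c γ₀ := norm_what_sq hc hv₀
  obtain ⟨g, hgc, hgd, hgev⟩ := exists_local_inverse hc hγ₀
  rw [← hbase] at hgc hgd hgev
  have hself := hgev.self_of_nhds
  have hg0 : γ₀ = g (‖what c (v t₀)‖ ^ 2) := by
    refine (Hfun_strictMonoOn hc).injOn (Set.mem_Ici.2 (by linarith))
      (Set.mem_Ici.2 hself.2.le) ?_
    rw [hself.1]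
    exact hbase.symm
  refine ⟨g, hgc, hgd, ?_, hg0⟩
  have htend : Tendsto (fun s => ‖what c (v s)‖ ^ 2) l (𝓝 (‖what c (v t₀)‖ ^ 2)) :=
    (hu.tendsto).comp (le_trans hl (le_refl _))
  have hP : ∀ᶠ s in l, Hfun c (g (‖what c (v s)‖ ^ 2)) = ‖what c (v s)‖ ^ 2 ∧
      3/4 < g (‖what c (v s)‖ ^ 2) := htend hgev
  filter_upwards [hP, hv] with s hPs hvs
  have h1 : Hfun c (lorentz c (v s)) = ‖what c (v s)‖ ^ 2 := (norm_what_sq hc hvs).symm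
  have h2 : (1:ℝ) ≤ lorentz c (v s) := one_le_lorentz hc hvs
  refine (Hfun_strictMonoOn hc).injOn ?_ ?_ (by rw [h1, hPs.1])
  · exact Set.mem_Ici.2 (by linarith)
  · exact Set.mem_Ici.2 (le_of_lt hPs.2)

lemma kin_hasDerivAt (hc : 0 < c) {v : ℝ → EuclideanSpace ℝ (Fin d)} {t₀ : ℝ}
    (hvnear : ∀ᶠ s in 𝓝 t₀, ‖v s‖ < c) {W' : EuclideanSpace ℝ (Fin d)}
    (hw : HasDerivAt (fun s => what c (v s)) W' t₀) :
    HasDerivAt (fun s => c ^ 2 * (lorentz c (v s) - 1) +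
        ((lorentz c (v s)) ^ 2 - Real.log (lorentz c (v s))))
      ((inner ℝ W' (v t₀) : ℝ)) t₀ := by
  have hv₀ : ‖v t₀‖ < c := hvnear.self_of_nhds
  set γ₀ := lorentz c (v t₀) with hγ₀def
  have hγ₀ : 1 ≤ γ₀ := one_le_lorentz hc hv₀
  have hγ₀0 : γ₀ ≠ 0 := by linarith
  set w₀ := what c (v t₀) with hw₀def
  -- derivative of u = ‖w‖²
  have hueq : (fun s => ‖what c (v s)‖ ^ 2) =
      fun s => (inner ℝ (what c (v s)) (what c (v s)) : ℝ) := by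
    funext s; rw [real_inner_self_eq_norm_sq]
  have hu : HasDerivAt (fun s => ‖what c (v s)‖ ^ 2)
      ((inner ℝ w₀ W' : ℝ) + (inner ℝ W' w₀ : ℝ)) t₀ := by
    rw [hueq]; exact hw.inner ℝ hw
  obtain ⟨g, hgc, hgd, hgev, -⟩ := lorentz_eventuallyEq hc (le_refl (𝓝 t₀)) hvnear hv₀
    hu.continuousAt
  have hγder : HasDerivAt (fun s => lorentz c (v s))
      ((Hder c γ₀)⁻¹ * ((inner ℝ w₀ W' : ℝ) + (inner ℝ W' w₀ : ℝ))) t₀ :=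
    ((hgd.comp t₀ hu)).congr_of_eventuallyEq hgev
  -- outer scalar function
  have hlog : HasDerivAt Real.log γ₀⁻¹ γ₀ := Real.hasDerivAt_log hγ₀0
  have hF : HasDerivAt (fun y : ℝ => c ^ 2 * (y - 1) + (y ^ 2 - Real.log y))
      (c ^ 2 * 1 + (2 * γ₀ ^ 1 - γ₀⁻¹)) γ₀ := by
    have h1 := ((hasDerivAt_id γ₀).sub_const 1).const_mul (c ^ 2)
    have h2 := (hasDerivAt_pow 2 γ₀).sub hlog
    refine (h1.add h2).congr_deriv ?_
    norm_num
  have hcomp := hF.comp t₀ hγder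
  have : HasDerivAt (fun s => c ^ 2 * (lorentz c (v s) - 1) +
      ((lorentz c (v s)) ^ 2 - Real.log (lorentz c (v s))))
      ((c ^ 2 * 1 + (2 * γ₀ ^ 1 - γ₀⁻¹)) *
        ((Hder c γ₀)⁻¹ * ((inner ℝ w₀ W' : ℝ) + (inner ℝ W' w₀ : ℝ)))) t₀ := hcomp
  convert this using 1
  -- algebra
  have hFs : 0 < Fs c γ₀ := Fs_pos hc hγ₀
  have hvw : w₀ = Fs c γ₀ • v t₀ := what_eq c (v t₀)
  have hinner1 : (inner ℝ W' w₀ : ℝ) = Fs c γ₀ * (inner ℝ W' (v t₀) : ℝ) := by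
    rw [hvw, real_inner_smul_right]
  have hinner2 : (inner ℝ w₀ W' : ℝ) = Fs c γ₀ * (inner ℝ W' (v t₀) : ℝ) := by
    rw [real_inner_comm]; exact hinner1
  rw [hinner1, hinner2, Hder_eq c hγ₀0]
  have hF' : (0:ℝ) < c ^ 2 + 2 * γ₀ - γ₀⁻¹ := by
    have h1 : γ₀⁻¹ ≤ 1 := by
      rw [inv_le_one_iff₀]; right; exact hγ₀
    nlinarith [sq_nonneg c, hc]
  have hrw : c ^ 2 * 1 + (2 * γ₀ ^ 1 - γ₀⁻¹) = c ^ 2 + 2 * γ₀ - γ₀⁻¹ := by ring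
  rw [hrw]
  generalize (inner ℝ W' (v t₀) : ℝ) = P
  generalize hFF : Fs c γ₀ = F at hFs
  generalize ha : c ^ 2 + 2 * γ₀ - γ₀⁻¹ = a at hF'
  field_simp
  ring

lemma norm_sub_hasDerivAt {f g : ℝ → EuclideanSpace ℝ (Fin d)} {f' g' : EuclideanSpace ℝ (Fin d)}
    {t₀ : ℝ} (hf : HasDerivAt f f' t₀) (hg : HasDerivAt g g' t₀) (hne : f t₀ ≠ g t₀) :
    HasDerivAt (fun t => ‖f t - g t‖)
      ((inner ℝ (f t₀ - g t₀) (f' - g') : ℝ) / ‖f t₀ - g t₀‖) t₀ := by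
  have hd := hf.sub hg
  have hq : HasDerivAt (fun t => (inner ℝ (f t - g t) (f t - g t) : ℝ))
      ((inner ℝ (f t₀ - g t₀) (f' - g') : ℝ) + (inner ℝ (f' - g') (f t₀ - g t₀) : ℝ)) t₀ :=
    hd.inner ℝ hd
  have hq0 : (inner ℝ (f t₀ - g t₀) (f t₀ - g t₀) : ℝ) ≠ 0 := by
    rw [real_inner_self_eq_norm_sq]
    exact pow_ne_zero 2 (norm_ne_zero_iff.2 (sub_ne_zero.2 hne))
  have hsq := (Real.hasDerivAt_sqrt hq0).comp t₀ hq
  have heq : (fun t => Real.sqrt (inner ℝ (f t - g t) (f t - g t) : ℝ)) =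
      fun t => ‖f t - g t‖ := by
    funext t; rw [real_inner_self_eq_norm_sq, Real.sqrt_sq (norm_nonneg _)]
  have hsq2 := hsq.congr_of_eventuallyEq (Filter.Eventually.of_forall fun t =>
    (congrFun heq t).symm)
  refine hsq2.congr_deriv ?_
  have hn0 : ‖f t₀ - g t₀‖ ≠ 0 := norm_ne_zero_iff.2 (sub_ne_zero.2 hne)
  rw [real_inner_self_eq_norm_sq, Real.sqrt_sq (norm_nonneg _),
    real_inner_comm (f' - g') (f t₀ - g t₀)]
  field_simp
  ring


lemma sym_sum {d N : ℕ} (Q : Fin N → Fin N → ℝ) (hQ : ∀ i j, Q i j = Q j i)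
    (Z Y : Fin N → EuclideanSpace ℝ (Fin d)) :
    ∑ i, ∑ j, Q i j * (inner ℝ (Z j - Z i) (Y i) : ℝ)
      = -(1/2) * ∑ i, ∑ j, Q i j * (inner ℝ (Z j - Z i) (Y j - Y i) : ℝ) := by
  have hsw : ∑ i, ∑ j, Q i j * (inner ℝ (Z j - Z i) (Y i) : ℝ)
      = ∑ i, ∑ j, Q j i * (inner ℝ (Z i - Z j) (Y j) : ℝ) := Finset.sum_comm
  have hkey : ∀ i j : Fin N, Q i j * (inner ℝ (Z j - Z i) (Y i) : ℝ)
      + Q j i * (inner ℝ (Z i - Z j) (Y j) : ℝ)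
      = -(Q i j * (inner ℝ (Z j - Z i) (Y j - Y i) : ℝ)) := by
    intro i j
    rw [← hQ i j, ← neg_sub (Z j) (Z i), inner_neg_left, inner_sub_right]
    push_cast
    ring
  have h2 : (∑ i, ∑ j, Q i j * (inner ℝ (Z j - Z i) (Y i) : ℝ))
      + (∑ i, ∑ j, Q j i * (inner ℝ (Z i - Z j) (Y j) : ℝ))
      = -(∑ i, ∑ j, Q i j * (inner ℝ (Z j - Z i) (Y j - Y i) : ℝ)) := by
    rw [← Finset.sum_add_distrib]
    rw [← Finset.sum_neg_distrib]
    refine Finset.sum_congr rfl fun i _ => ?_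
    rw [← Finset.sum_add_distrib, ← Finset.sum_neg_distrib]
    exact Finset.sum_congr rfl fun j _ => hkey i j
  linarith [hsw, h2]

lemma alg_nonpos {d N : ℕ} (hN : 0 < (N:ℝ)) (κ₀ κ₁ κ₂ : ℝ) (hκ₀ : 0 ≤ κ₀) (hκ₁ : 0 ≤ κ₁)
    (φ : ℝ → ℝ) (hφ0 : ∀ r, 0 ≤ φ r) (R : Fin N → Fin N → ℝ) (hRsym : ∀ i j, R i j = R j i)
    (X V : Fin N → EuclideanSpace ℝ (Fin d)) (hXne : ∀ i j : Fin N, i ≠ j → X i ≠ X j) :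
    ∑ i, (inner ℝ (rcsForce N κ₀ κ₁ κ₂ φ R X V i) (V i) : ℝ)
      + κ₂ / (8 * N) * ∑ i, ∑ j ∈ Finset.univ.filter (fun j => j ≠ i),
          (2 * (‖X i - X j‖ - R i j) * ((inner ℝ (X i - X j) (V i - V j) : ℝ) / ‖X i - X j‖)) ≤ 0 := by
  classical
  set μ : Fin N → Fin N → ℝ := fun i j =>
    (κ₁ * ((inner ℝ (V j - V i) (X j - X i) : ℝ) / ‖X j - X i‖)
      + κ₂ * (‖X i - X j‖ - R i j)) / ‖X j - X i‖ with hμdef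
  have hinner_sym : ∀ i j : Fin N, (inner ℝ (V j - V i) (X j - X i) : ℝ)
      = (inner ℝ (V i - V j) (X i - X j) : ℝ) := by
    intro i j
    rw [← neg_sub (V i) (V j), ← neg_sub (X i) (X j), inner_neg_neg]
  have hμsym : ∀ i j, μ i j = μ j i := by
    intro i j
    simp only [hμdef]
    rw [hinner_sym i j, hRsym i j, norm_sub_rev (X j) (X i), norm_sub_rev (X i) (X j)]
  -- rewrite forces
  have h1 : ∀ i : Fin N, (inner ℝ (rcsForce N κ₀ κ₁ κ₂ φ R X V i) (V i) : ℝ)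
      = κ₀ / N * ∑ j, φ ‖X i - X j‖ * (inner ℝ (V j - V i) (V i) : ℝ)
        + 1 / (2 * N) * ∑ j ∈ Finset.univ.filter (fun j => j ≠ i),
            μ i j * (inner ℝ (X j - X i) (V i) : ℝ) := by
    intro i
    simp only [rcsForce, inner_add_left, real_inner_smul_left, sum_inner, hμdef]
  -- extend filtered sums to full sums
  have h2 : ∀ i : Fin N, ∑ j ∈ Finset.univ.filter (fun j => j ≠ i),
      μ i j * (inner ℝ (X j - X i) (V i) : ℝ) = ∑ j, μ i j * (inner ℝ (X j - X i) (V i) : ℝ) := by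
    intro i
    refine Finset.sum_subset (Finset.filter_subset _ _) fun j _ hj => ?_
    have : j = i := by simpa using hj
    subst this
    simp
  have h3 : ∀ i : Fin N, ∑ j ∈ Finset.univ.filter (fun j => j ≠ i),
      (2 * (‖X i - X j‖ - R i j) * ((inner ℝ (X i - X j) (V i - V j) : ℝ) / ‖X i - X j‖))
      = ∑ j, (2 * (‖X i - X j‖ - R i j) * ((inner ℝ (X i - X j) (V i - V j) : ℝ) / ‖X i - X j‖)) := by
    intro i
    refine Finset.sum_subset (Finset.filter_subset _ _) fun j _ hj => ?_
    have : j = i := by simpa using hj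
    subst this
    simp
  have hA := sym_sum (fun i j => φ ‖X i - X j‖)
    (fun i j => by rw [norm_sub_rev]) V V
  have hB := sym_sum μ hμsym X V
  -- bound the φ part
  have hAle : κ₀ / N * ∑ i, ∑ j, φ ‖X i - X j‖ * (inner ℝ (V j - V i) (V i) : ℝ) ≤ 0 := by
    rw [hA]
    have hs : 0 ≤ ∑ i, ∑ j : Fin N, φ ‖X i - X j‖ * (inner ℝ (V j - V i) (V j - V i) : ℝ) :=
      Finset.sum_nonneg fun i _ => Finset.sum_nonneg fun j _ =>
        mul_nonneg (hφ0 _) real_inner_self_nonneg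
    have hk : 0 ≤ κ₀ / N := by positivity
    nlinarith
  -- the pair part
  have hpair : 1 / (2 * (N:ℝ)) * ∑ i, ∑ j, μ i j * (inner ℝ (X j - X i) (V i) : ℝ)
      + κ₂ / (8 * N) * ∑ i, ∑ j, (2 * (‖X i - X j‖ - R i j)
          * ((inner ℝ (X i - X j) (V i - V j) : ℝ) / ‖X i - X j‖)) ≤ 0 := by
    rw [hB]
    have hterm : ∀ i j : Fin N,
        1 / (2 * (N:ℝ)) * (-(1/2) * (μ i j * (inner ℝ (X j - X i) (V j - V i) : ℝ)))
        + κ₂ / (8 * N) * (2 * (‖X i - X j‖ - R i j)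
            * ((inner ℝ (X i - X j) (V i - V j) : ℝ) / ‖X i - X j‖)) ≤ 0 := by
      intro i j
      by_cases hij : j = i
      · subst hij
        simp
      · have hne : X j ≠ X i := hXne j i hij
        have hr : 0 < ‖X j - X i‖ := by
          rw [norm_pos_iff]; exact sub_ne_zero.2 hne
        have hrr : ‖X i - X j‖ = ‖X j - X i‖ := norm_sub_rev _ _
        have hDD : (inner ℝ (X i - X j) (V i - V j) : ℝ)
            = (inner ℝ (X j - X i) (V j - V i) : ℝ) := by
          rw [← neg_sub (X j) (X i), ← neg_sub (V j) (V i), inner_neg_neg]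
        have hDc : (inner ℝ (V j - V i) (X j - X i) : ℝ)
            = (inner ℝ (X j - X i) (V j - V i) : ℝ) := real_inner_comm _ _
        simp only [hμdef, hrr, hDD, hDc]
        set D := (inner ℝ (X j - X i) (V j - V i) : ℝ) with hD
        set r := ‖X j - X i‖ with hrdef
        have hEq : 1 / (2 * (N:ℝ)) * (-(1/2) * ((κ₁ * (D / r) + κ₂ * (r - R i j)) / r * D))
            + κ₂ / (8 * N) * (2 * (r - R i j) * (D / r))
            = -(κ₁ * (D / r) ^ 2) / (4 * N) := by
          field_simp
          ring
        rw [hEq, neg_div]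
        exact neg_nonpos.2 (by positivity)
    calc 1 / (2 * (N:ℝ)) * (-(1/2) * ∑ i, ∑ j, μ i j * (inner ℝ (X j - X i) (V j - V i) : ℝ))
          + κ₂ / (8 * N) * ∑ i, ∑ j, (2 * (‖X i - X j‖ - R i j)
              * ((inner ℝ (X i - X j) (V i - V j) : ℝ) / ‖X i - X j‖))
        = ∑ i, ∑ j, (1 / (2 * (N:ℝ)) * (-(1/2) * (μ i j * (inner ℝ (X j - X i) (V j - V i) : ℝ)))
            + κ₂ / (8 * N) * (2 * (‖X i - X j‖ - R i j)
              * ((inner ℝ (X i - X j) (V i - V j) : ℝ) / ‖X i - X j‖))) := by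
          simp only [Finset.mul_sum, Finset.sum_add_distrib]
      _ ≤ 0 := Finset.sum_nonpos fun i _ => Finset.sum_nonpos fun j _ => hterm i j
  -- assemble
  have hsplit : ∑ i, (inner ℝ (rcsForce N κ₀ κ₁ κ₂ φ R X V i) (V i) : ℝ)
      = κ₀ / N * ∑ i, ∑ j, φ ‖X i - X j‖ * (inner ℝ (V j - V i) (V i) : ℝ)
        + 1 / (2 * (N:ℝ)) * ∑ i, ∑ j, μ i j * (inner ℝ (X j - X i) (V i) : ℝ) := by
    rw [Finset.sum_congr rfl fun i _ => (h1 i).trans (by rw [h2 i])]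
    rw [Finset.sum_add_distrib, ← Finset.mul_sum, ← Finset.mul_sum]
  rw [hsplit, Finset.sum_congr rfl fun i _ => h3 i]
  linarith [hAle, hpair]


lemma kinE_ge {d N : ℕ} {c : ℝ} (hc : 0 < c) {V : Fin N → EuclideanSpace ℝ (Fin d)}
    (hv : ∀ i, ‖V i‖ < c) : (N : ℝ) ≤ kinE c V := by
  have h : ∀ i : Fin N, (1:ℝ) ≤ c ^ 2 * (lorentz c (V i) - 1)
      + (lorentz c (V i) ^ 2 - Real.log (lorentz c (V i))) := by
    intro i
    have hγ := one_le_lorentz hc (hv i)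
    have hlog := Real.log_le_sub_one_of_pos (show (0:ℝ) < lorentz c (V i) by linarith)
    nlinarith [sq_nonneg c, sq_nonneg (lorentz c (V i) - 1)]
  calc (N:ℝ) = ∑ _i : Fin N, (1:ℝ) := by simp
    _ ≤ kinE c V := Finset.sum_le_sum fun i _ => h i

lemma potE_nonneg {d N : ℕ} {κ₂ : ℝ} (hκ₂ : 0 ≤ κ₂) (R : Fin N → Fin N → ℝ)
    (X : Fin N → EuclideanSpace ℝ (Fin d)) : 0 ≤ potE κ₂ R X := by
  refine mul_nonneg (div_nonneg hκ₂ (by positivity)) ?_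
  exact Finset.sum_nonneg fun i _ => Finset.sum_nonneg fun j _ => sq_nonneg _

lemma potE_pair_le {d N : ℕ} {κ₂ : ℝ} (hκ₂ : 0 ≤ κ₂) (R : Fin N → Fin N → ℝ)
    (hRsym : ∀ i j, R i j = R j i) (X : Fin N → EuclideanSpace ℝ (Fin d))
    {i j : Fin N} (hij : i ≠ j) :
    κ₂ / (8 * N) * (2 * (‖X i - X j‖ - R i j) ^ 2) ≤ potE κ₂ R X := by
  classical
  have h1 : (‖X i - X j‖ - R i j) ^ 2
      ≤ ∑ j' ∈ Finset.univ.filter (fun j' => j' ≠ i), (‖X i - X j'‖ - R i j') ^ 2 :=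
    Finset.single_le_sum (f := fun j' => (‖X i - X j'‖ - R i j') ^ 2)
      (fun _ _ => sq_nonneg _)
      (Finset.mem_filter.2 ⟨Finset.mem_univ j, hij.symm⟩)
  have h2 : (‖X j - X i‖ - R j i) ^ 2
      ≤ ∑ j' ∈ Finset.univ.filter (fun j' => j' ≠ j), (‖X j - X j'‖ - R j j') ^ 2 :=
    Finset.single_le_sum (f := fun j' => (‖X j - X j'‖ - R j j') ^ 2)
      (fun _ _ => sq_nonneg _)
      (Finset.mem_filter.2 ⟨Finset.mem_univ i, hij⟩)
  rw [norm_sub_rev (X j) (X i), ← hRsym i j] at h2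
  have h3 : (∑ j' ∈ Finset.univ.filter (fun j' => j' ≠ i), (‖X i - X j'‖ - R i j') ^ 2)
      + ∑ j' ∈ Finset.univ.filter (fun j' => j' ≠ j), (‖X j - X j'‖ - R j j') ^ 2
      ≤ ∑ k, ∑ j' ∈ Finset.univ.filter (fun j' => j' ≠ k), (‖X k - X j'‖ - R k j') ^ 2 := by
    have h4 := Finset.sum_le_sum_of_subset_of_nonneg
      (f := fun k => ∑ j' ∈ Finset.univ.filter (fun j' => j' ≠ k), (‖X k - X j'‖ - R k j') ^ 2)
      (Finset.subset_univ {i, j})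
      (fun k _ _ => Finset.sum_nonneg fun j' _ =>
        sq_nonneg (‖X k - X j'‖ - R k j'))
    rwa [Finset.sum_pair hij] at h4
  have h5 : 2 * (‖X i - X j‖ - R i j) ^ 2
      ≤ ∑ k, ∑ j' ∈ Finset.univ.filter (fun j' => j' ≠ k), (‖X k - X j'‖ - R k j') ^ 2 := by
    linarith
  have h6 : (0:ℝ) ≤ κ₂ / (8 * N) := div_nonneg hκ₂ (by positivity)
  calc κ₂ / (8 * N) * (2 * (‖X i - X j‖ - R i j) ^ 2)
      ≤ κ₂ / (8 * N) * ∑ k, ∑ j' ∈ Finset.univ.filter (fun j' => j' ≠ k),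
          (‖X k - X j'‖ - R k j') ^ 2 := mul_le_mul_of_nonneg_left h5 h6
    _ = potE κ₂ R X := rfl


end RCS

/-- Uniform bounds on relative distances: along any solution of the RCS model with bonding
force on `[0,τ)` (with `κ₂ > 0`) the initial energy satisfies `E(0) ≥ N` and
`R_ij − √(4N(E(0)−N)/κ₂) ≤ |x_i(t) − x_j(t)| ≤ R_ij + √(4N(E(0)−N)/κ₂)` for `i ≠ j`;
in particular the same bounds hold with `min_{k≠l} R_kl` and `max_{k≠l} R_kl`. -/
theorem uniform_distance_bounds
    (d N : ℕ) (hd : 1 ≤ d) (hN : 2 ≤ N)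
    (c κ₀ κ₁ κ₂ : ℝ) (hc : 0 < c) (hκ₀ : 0 ≤ κ₀) (hκ₁ : 0 ≤ κ₁) (hκ₂ : 0 < κ₂)
    (φ : ℝ → ℝ) (φM : ℝ) (hφ : LocallyLipschitz φ)
    (hφ0 : ∀ r, 0 ≤ φ r) (hφM : ∀ r, φ r ≤ φM)
    (R : Fin N → Fin N → ℝ) (hR0 : ∀ i, R i i = 0)
    (hRsym : ∀ i j, R i j = R j i) (hRnn : ∀ i j, 0 ≤ R i j)
    (Rmin Rmax : ℝ)
    (hRmin : IsLeast {r : ℝ | ∃ i j : Fin N, i ≠ j ∧ r = R i j} Rmin)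
    (hRmax : IsGreatest {r : ℝ | ∃ i j : Fin N, i ≠ j ∧ r = R i j} Rmax)
    (τ : ℝ≥0∞) (hτ : 0 < τ)
    (x v : Fin N → ℝ → EuclideanSpace ℝ (Fin d))
    (hsol : IsRCSSol N c κ₀ κ₁ κ₂ φ R τ x v) :
    (N : ℝ) ≤ totE c κ₂ R (fun i => x i 0) (fun i => v i 0) ∧
    ∀ t ∈ dom τ, ∀ i j : Fin N, i ≠ j →
      (R i j - Real.sqrt (4 * N * (totE c κ₂ R (fun i => x i 0) (fun i => v i 0) - N) / κ₂)
          ≤ ‖x i t - x j t‖ ∧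
        ‖x i t - x j t‖
          ≤ R i j + Real.sqrt (4 * N * (totE c κ₂ R (fun i => x i 0) (fun i => v i 0) - N) / κ₂)) ∧
      (Rmin - Real.sqrt (4 * N * (totE c κ₂ R (fun i => x i 0) (fun i => v i 0) - N) / κ₂)
          ≤ ‖x i t - x j t‖ ∧
        ‖x i t - x j t‖
          ≤ Rmax + Real.sqrt (4 * N * (totE c κ₂ R (fun i => x i 0) (fun i => v i 0) - N) / κ₂)) := by
  classical
  have hNpos : (0:ℝ) < N := by
    have : (0:ℕ) < N := by omega
    exact_mod_cast this
  have h0dom : (0:ℝ) ∈ dom τ := ⟨le_refl 0, by simpa using hτ⟩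
  set E0 := totE c κ₂ R (fun i => x i 0) (fun i => v i 0) with hE0def
  have hs0 := hsol 0 h0dom
  have hkin0 : (N:ℝ) ≤ kinE c (fun i => v i 0) := RCS.kinE_ge hc hs0.1
  have hpot0 : 0 ≤ potE κ₂ R (fun i => x i 0) := RCS.potE_nonneg hκ₂.le R _
  have hpart1 : (N:ℝ) ≤ E0 := by
    rw [hE0def, totE]
    linarith
  refine ⟨hpart1, ?_⟩
  intro t ht i j hij
  obtain ⟨ht0, htτ⟩ := ht
  have hIccdom : Set.Icc (0:ℝ) t ⊆ dom τ := fun s hs =>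
    ⟨hs.1, lt_of_le_of_lt (ENNReal.ofReal_le_ofReal hs.2) htτ⟩
  have hEdec : totE c κ₂ R (fun i => x i t) (fun i => v i t) ≤ E0 := by
    rcases eq_or_lt_of_le ht0 with h0 | h0
    · rw [hE0def, ← h0]
    · obtain ⟨T, hTt, hTτ⟩ : ∃ T : ℝ, t < T ∧ ENNReal.ofReal T < τ := by
        rcases eq_or_ne τ ⊤ with hT | hT
        · exact ⟨t + 1, by linarith, by simp [hT]⟩
        · have h1 : t < τ.toReal := (ENNReal.ofReal_lt_iff_lt_toReal ht0 hT).1 htτ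
          exact ⟨(t + τ.toReal) / 2, by linarith,
            (ENNReal.ofReal_lt_iff_lt_toReal (by linarith) hT).2 (by linarith)⟩
      have hIoodom : Set.Ioo (0:ℝ) T ⊆ dom τ := fun s hs =>
        ⟨hs.1.le, lt_of_le_of_lt (ENNReal.ofReal_le_ofReal hs.2.le) hTτ⟩
      have hDER : ∀ s ∈ Set.Ioo (0:ℝ) T, ∃ e : ℝ, e ≤ 0 ∧
          HasDerivAt (fun u => totE c κ₂ R (fun i => x i u) (fun i => v i u)) e s := by
        intro s hs
        have hsd := hsol s (hIoodom hs)
        have hdomnb : ∀ᶠ u in 𝓝 s, u ∈ dom τ :=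
          Filter.mem_of_superset (isOpen_Ioo.mem_nhds hs) hIoodom
        have hkd : HasDerivAt (fun u => ∑ i, (c ^ 2 * (lorentz c (v i u) - 1)
              + (lorentz c (v i u) ^ 2 - Real.log (lorentz c (v i u)))))
            (∑ i, (inner ℝ (rcsForce N κ₀ κ₁ κ₂ φ R (fun k => x k s) (fun k => v k s) i)
              (v i s) : ℝ)) s :=
          HasDerivAt.fun_sum fun i _ => RCS.kin_hasDerivAt hc
            (hdomnb.mono fun u hu => (hsol u hu).1 i) (hsd.2.2.2 i)
        have hpd : HasDerivAt (fun u => κ₂ / (8 * (N:ℝ)) * ∑ i,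
              ∑ j ∈ Finset.univ.filter (fun j => j ≠ i), (‖x i u - x j u‖ - R i j) ^ 2)
            (κ₂ / (8 * (N:ℝ)) * ∑ i, ∑ j ∈ Finset.univ.filter (fun j => j ≠ i),
              (2 * (‖x i s - x j s‖ - R i j)
                * ((inner ℝ (x i s - x j s) (v i s - v j s) : ℝ) / ‖x i s - x j s‖))) s := by
          refine HasDerivAt.const_mul _ (HasDerivAt.fun_sum fun i _ => HasDerivAt.fun_sum fun j hj => ?_)
          have hjne : j ≠ i := (Finset.mem_filter.1 hj).2
          have hne : x i s ≠ x j s := hsd.2.1 i j (Ne.symm hjne)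
          have h := ((RCS.norm_sub_hasDerivAt (hsd.2.2.1 i) (hsd.2.2.1 j) hne).sub_const
            (R i j)).pow 2
          refine h.congr_deriv ?_
          push_cast
          ring
        refine ⟨(∑ i, (inner ℝ (rcsForce N κ₀ κ₁ κ₂ φ R (fun k => x k s) (fun k => v k s) i)
              (v i s) : ℝ))
            + κ₂ / (8 * (N:ℝ)) * ∑ i, ∑ j ∈ Finset.univ.filter (fun j => j ≠ i),
              (2 * (‖x i s - x j s‖ - R i j)
                * ((inner ℝ (x i s - x j s) (v i s - v j s) : ℝ) / ‖x i s - x j s‖)), ?_, ?_⟩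
        · exact RCS.alg_nonpos hNpos κ₀ κ₁ κ₂ hκ₀ hκ₁ φ hφ0 R hRsym
            (fun k => x k s) (fun k => v k s) hsd.2.1
        · exact hkd.add hpd
      have hcont : ContinuousOn
          (fun u => totE c κ₂ R (fun i => x i u) (fun i => v i u)) (Set.Icc 0 t) := by
        intro s hs
        rcases eq_or_lt_of_le hs.1 with h0s | h0s
        · subst h0s
          have hxc : ∀ k : Fin N, ContinuousAt (x k) 0 := fun k => (hs0.2.2.1 k).continuousAt
          have hγc : ∀ k : Fin N,
              ContinuousWithinAt (fun u => lorentz c (v k u)) (Set.Icc 0 t) 0 := by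
            intro k
            have huc : ContinuousAt (fun u => ‖what c (v k u)‖ ^ 2) 0 :=
              ((hs0.2.2.2 k).continuousAt.norm).pow 2
            have hvev : ∀ᶠ u in 𝓝[Set.Icc (0:ℝ) t] 0, ‖v k u‖ < c :=
              eventually_mem_nhdsWithin.mono fun u hu => (hsol u (hIccdom hu)).1 k
            obtain ⟨g, hgc, -, hgev, hg0⟩ := RCS.lorentz_eventuallyEq hc nhdsWithin_le_nhds
              hvev (hs0.1 k) huc
            have hcomp : ContinuousAt (fun u => g (‖what c (v k u)‖ ^ 2)) 0 :=
              hgc.tendsto.comp huc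
            exact (hcomp.continuousWithinAt).congr_of_eventuallyEq hgev hg0
          have hkinc : ContinuousWithinAt (fun u => ∑ i, (c ^ 2 * (lorentz c (v i u) - 1)
              + (lorentz c (v i u) ^ 2 - Real.log (lorentz c (v i u)))))
              (Set.Icc 0 t) 0 := by
            refine tendsto_finset_sum _ fun k _ => ?_
            have h1 := hγc k
            have hγ1 : (1:ℝ) ≤ lorentz c (v k 0) := RCS.one_le_lorentz hc (hs0.1 k)
            exact (((h1.sub continuousWithinAt_const).const_mul (c ^ 2))).add
              ((h1.pow 2).sub (h1.log (by linarith)))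
          have hpotc : ContinuousWithinAt (fun u => κ₂ / (8 * (N:ℝ)) * ∑ i,
              ∑ j ∈ Finset.univ.filter (fun j => j ≠ i), (‖x i u - x j u‖ - R i j) ^ 2)
              (Set.Icc 0 t) 0 := by
            refine ContinuousAt.continuousWithinAt ?_
            refine continuousAt_const.mul ?_
            refine tendsto_finset_sum _ fun i' _ => ?_
            refine tendsto_finset_sum _ fun j' _ => ?_
            exact (((hxc i').sub (hxc j')).norm.sub continuousAt_const).pow 2
          exact hkinc.add hpotc
        · have hsIoo : s ∈ Set.Ioo (0:ℝ) T := ⟨h0s, lt_of_le_of_lt hs.2 hTt⟩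
          obtain ⟨e, -, hd⟩ := hDER s hsIoo
          exact hd.continuousAt.continuousWithinAt
      have hanti : AntitoneOn (fun u => totE c κ₂ R (fun i => x i u) (fun i => v i u))
          (Set.Icc 0 t) := by
        refine antitoneOn_of_deriv_nonpos (convex_Icc 0 t) hcont ?_ ?_
        · intro s hs
          rw [interior_Icc] at hs
          obtain ⟨e, -, hd⟩ := hDER s ⟨hs.1, lt_trans hs.2 hTt⟩
          exact hd.differentiableAt.differentiableWithinAt
        · intro s hs
          rw [interior_Icc] at hs
          obtain ⟨e, he, hd⟩ := hDER s ⟨hs.1, lt_trans hs.2 hTt⟩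
          rw [hd.deriv]
          exact he
      have hmono := hanti (Set.mem_Icc.2 ⟨le_refl 0, h0.le⟩)
        (Set.mem_Icc.2 ⟨h0.le, le_refl t⟩) h0.le
      rw [hE0def]
      exact hmono
  have hst := hsol t ⟨ht0, htτ⟩
  have hkint : (N:ℝ) ≤ kinE c (fun i => v i t) := RCS.kinE_ge hc hst.1
  have htot : totE c κ₂ R (fun i => x i t) (fun i => v i t)
      = kinE c (fun i => v i t) + potE κ₂ R (fun i => x i t) := rfl
  rw [htot] at hEdec
  have hpott : potE κ₂ R (fun i => x i t) ≤ E0 - N := by linarith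
  have hpair : κ₂ / (8 * (N:ℝ)) * (2 * (‖x i t - x j t‖ - R i j) ^ 2)
      ≤ potE κ₂ R (fun i => x i t) :=
    RCS.potE_pair_le hκ₂.le R hRsym (fun k => x k t) hij
  have hsq : (‖x i t - x j t‖ - R i j) ^ 2 ≤ 4 * N * (E0 - N) / κ₂ := by
    have h1 : κ₂ / (8 * (N:ℝ)) * (2 * (‖x i t - x j t‖ - R i j) ^ 2) ≤ E0 - N :=
      le_trans hpair hpott
    have h2 : (0:ℝ) < 8 * (N:ℝ) := by linarith
    rw [div_mul_eq_mul_div, div_le_iff₀ h2] at h1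
    rw [le_div_iff₀ hκ₂]
    nlinarith [h1]
  have habs : |‖x i t - x j t‖ - R i j| ≤ Real.sqrt (4 * N * (E0 - N) / κ₂) := by
    have h3 := Real.sqrt_le_sqrt hsq
    rwa [Real.sqrt_sq_eq_abs] at h3
  obtain ⟨hlo, hhi⟩ := abs_le.1 habs
  have hminle : Rmin ≤ R i j := hRmin.2 ⟨i, j, hij, rfl⟩
  have hmaxge : R i j ≤ Rmax := hRmax.2 ⟨i, j, hij, rfl⟩
  exact ⟨⟨by linarith, by linarith⟩, by linarith, by linarith⟩
end
end

section
/- (Collision avoidance) Assume κ₂ > 0, R^∞_{ij} > 0 for all i ≠ j, and let {(x_i, v_i)}_{i=1}^N be a solution of the RCS model with bonding force on [0,τ). If E(0) < N + (κ₂/(4N))·min_{i≠j}(R^∞_{ij})², then inf_{t ∈ [0,τ)} min_{i≠j} |x_i(t) − x_j(t)| > 0; more precisely, |x_i(t) − x_j(t)| ≥ min_{k≠l} R^∞_{kl} − √(4N(E(0) − N)/κ₂) > 0 for all t ∈ [0,τ) and all i ≠ j. -/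
open scoped BigOperators ENNReal Topology
open Filter

noncomputable section

namespace CA

/-- `g(γ) = c²(γ²−1)(1+γ/c²)²`, so that `g(Γ(v)) = ‖ŵ(v)‖²`. -/
def gfun (c γ : ℝ) : ℝ := c ^ 2 * (γ ^ 2 - 1) * (1 + γ / c ^ 2) ^ 2

/-- `h(γ) = c²(γ−1) + γ² − log γ`, the kinetic energy term. -/
def hfun (c γ : ℝ) : ℝ := c ^ 2 * (γ - 1) + (γ ^ 2 - Real.log γ)

def gd (c a : ℝ) : ℝ := 2 * (1 + a / c ^ 2) * (a * c ^ 2 + 2 * a ^ 2 - 1)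

def hd (c a : ℝ) : ℝ := c ^ 2 + 2 * a - 1 / a

variable {d : ℕ} {c : ℝ}

lemma sqrt_pos_aux (hc : 0 < c) {v : EuclideanSpace ℝ (Fin d)} (hv : ‖v‖ < c) :
    0 < 1 - ‖v‖ ^ 2 / c ^ 2 := by
  have h1 : ‖v‖ ^ 2 < c ^ 2 := by nlinarith [norm_nonneg v]
  have h2 : (0:ℝ) < c ^ 2 := by positivity
  rw [sub_pos, div_lt_one h2]; exact h1

lemma one_le_lorentz (hc : 0 < c) {v : EuclideanSpace ℝ (Fin d)} (hv : ‖v‖ < c) :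
    1 ≤ lorentz c v := by
  have h0 := sqrt_pos_aux hc hv
  have h1 : 1 - ‖v‖ ^ 2 / c ^ 2 ≤ 1 := by
    have : 0 ≤ ‖v‖ ^ 2 / c ^ 2 := by positivity
    linarith
  have hs : 0 < Real.sqrt (1 - ‖v‖ ^ 2 / c ^ 2) := Real.sqrt_pos.2 h0
  have hs1 : Real.sqrt (1 - ‖v‖ ^ 2 / c ^ 2) ≤ 1 := by simpa using Real.sqrt_le_sqrt h1
  rw [lorentz]
  exact one_le_one_div hs hs1

lemma lorentz_pos (hc : 0 < c) {v : EuclideanSpace ℝ (Fin d)} (hv : ‖v‖ < c) :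
    0 < lorentz c v := lt_of_lt_of_le one_pos (one_le_lorentz hc hv)

lemma lorentz_inv_eq (hc : 0 < c) {v : EuclideanSpace ℝ (Fin d)} (hv : ‖v‖ < c) :
    (lorentz c v)⁻¹ = Real.sqrt (1 - ‖v‖ ^ 2 / c ^ 2) := by
  rw [lorentz, one_div, inv_inv]

lemma norm_sq_eq (hc : 0 < c) {v : EuclideanSpace ℝ (Fin d)} (hv : ‖v‖ < c) :
    ‖v‖ ^ 2 = c ^ 2 * (1 - ((lorentz c v)⁻¹) ^ 2) := by
  have h0 := sqrt_pos_aux hc hv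
  have h1 : ((lorentz c v)⁻¹) ^ 2 = 1 - ‖v‖ ^ 2 / c ^ 2 := by
    rw [lorentz_inv_eq hc hv, Real.sq_sqrt h0.le]
  rw [h1]
  field_simp
  ring

lemma Fmap_pos (hc : 0 < c) {v : EuclideanSpace ℝ (Fin d)} (hv : ‖v‖ < c) :
    0 < Fmap c v := by
  have h := lorentz_pos hc hv
  have : 0 < 1 + lorentz c v / c ^ 2 := by positivity
  exact mul_pos h this

lemma gfun_lorentz (hc : 0 < c) {v : EuclideanSpace ℝ (Fin d)} (hv : ‖v‖ < c) :
    gfun c (lorentz c v) = ‖what c v‖ ^ 2 := by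
  have hγ := lorentz_pos hc hv
  have hns := norm_sq_eq hc hv
  have h1 : ‖what c v‖ ^ 2 = (Fmap c v) ^ 2 * ‖v‖ ^ 2 := by
    rw [what, norm_smul]
    rw [mul_pow, Real.norm_eq_abs, sq_abs]
  rw [h1, hns, Fmap, gfun]
  have hc' : c ≠ 0 := hc.ne'
  have hγ' : lorentz c v ≠ 0 := hγ.ne'
  field_simp

lemma gfun_hasStrictDerivAt (hc : 0 < c) (a : ℝ) :
    HasStrictDerivAt (gfun c) (gd c a) a := by
  have hid := hasStrictDerivAt_id a
  have h1 : HasStrictDerivAt (fun γ : ℝ => γ * γ - 1) (1 * a + a * 1) a := by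
    simpa using (hid.fun_mul hid).fun_sub (hasStrictDerivAt_const a 1)
  have hb : HasStrictDerivAt (fun γ : ℝ => 1 + γ / c ^ 2) (1 / c ^ 2) a := by
    simpa using ((hasStrictDerivAt_id a).div_const (c ^ 2)).const_add 1
  have h2 := hb.fun_mul hb
  have h3 := (h1.fun_mul h2).const_mul (c ^ 2)
  have heq : gfun c = fun γ : ℝ =>
      c ^ 2 * ((γ * γ - 1) * ((1 + γ / c ^ 2) * (1 + γ / c ^ 2))) := by
    funext γ; simp only [gfun]; ring
  rw [heq]
  refine h3.congr_deriv ?_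
  have hc' : c ≠ 0 := hc.ne'
  simp only [gd]
  field_simp
  ring

lemma hfun_hasDerivAt (ha : (0:ℝ) < a) : HasDerivAt (hfun c) (hd c a) a := by
  have h1 : HasDerivAt (fun γ : ℝ => c ^ 2 * (γ - 1)) (c ^ 2) a := by
    simpa using ((hasDerivAt_id a).sub_const 1).const_mul (c ^ 2)
  have h2 : HasDerivAt (fun γ : ℝ => γ ^ 2 - Real.log γ) (2 * a - 1 / a) a := by
    have hp : HasDerivAt (fun γ : ℝ => γ ^ 2) (2 * a) a := by
      simpa using (hasDerivAt_id a).fun_pow 2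
    have hl : HasDerivAt Real.log a⁻¹ a := Real.hasDerivAt_log ha.ne'
    simpa [one_div] using hp.fun_sub hl
  have := h1.fun_add h2
  refine this.congr_deriv ?_
  rw [hd]; ring

lemma gd_pos (hc : 0 < c) {a : ℝ} (ha : (3/4:ℝ) ≤ a) : 0 < gd c a := by
  rw [gd]
  have h1 : 0 < 1 + a / c ^ 2 := by
    have : 0 < a / c ^ 2 := by positivity
    linarith
  have h2 : 0 < a * c ^ 2 + 2 * a ^ 2 - 1 := by nlinarith [sq_nonneg c, pow_pos hc 2]
  positivity

lemma hd_pos (hc : 0 < c) {a : ℝ} (ha : (1:ℝ) ≤ a) : 0 < hd c a := by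
  rw [hd]
  have h1 : 1 / a ≤ 1 := by
    rw [div_le_one (by linarith)]; linarith
  nlinarith [sq_nonneg c, pow_pos hc 2]

lemma gfun_strictMonoOn (hc : 0 < c) : StrictMonoOn (gfun c) (Set.Ici (3/4 : ℝ)) := by
  apply strictMonoOn_of_deriv_pos (convex_Ici _)
  · exact fun t _ => ((gfun_hasStrictDerivAt hc t).hasDerivAt).continuousAt.continuousWithinAt
  · intro t ht
    rw [interior_Ici] at ht
    rw [(gfun_hasStrictDerivAt hc t).hasDerivAt.deriv]
    exact gd_pos hc (le_of_lt ht)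

lemma one_le_hfun (hc : 0 < c) {v : EuclideanSpace ℝ (Fin d)} (hv : ‖v‖ < c) :
    1 ≤ hfun c (lorentz c v) := by
  have h1 := one_le_lorentz hc hv
  set γ := lorentz c v
  have hlog : Real.log γ ≤ γ - 1 := Real.log_le_sub_one_of_pos (by linarith)
  rw [hfun]
  nlinarith [sq_nonneg c, sq_nonneg (γ - 1), pow_pos hc 2]

end CA
namespace CA
open scoped RealInnerProductSpace

variable {d : ℕ} {c : ℝ}

lemma kin_term_hasDerivAt (hc : 0 < c) {v : ℝ → EuclideanSpace ℝ (Fin d)}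
    {w' : EuclideanSpace ℝ (Fin d)} {t₀ : ℝ}
    (hv : ∀ᶠ t in 𝓝 t₀, ‖v t‖ < c)
    (hw : HasDerivAt (fun t => what c (v t)) w' t₀) :
    HasDerivAt (fun t => hfun c (lorentz c (v t))) ⟪v t₀, w'⟫ t₀ := by
  have hv₀ : ‖v t₀‖ < c := hv.self_of_nhds
  set a := lorentz c (v t₀) with ha_def
  have ha1 : 1 ≤ a := one_le_lorentz hc hv₀
  set s : ℝ → ℝ := fun t => ‖what c (v t)‖ ^ 2 with hs_def
  have hsd : HasDerivAt s (2 * ⟪what c (v t₀), w'⟫) t₀ := hw.norm_sq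
  have hg := gfun_hasStrictDerivAt hc a
  have hgd : gd c a ≠ 0 := (gd_pos hc (by linarith)).ne'
  set L := hg.localInverse (gfun c) (gd c a) a hgd with hL_def
  have hLstrict : HasStrictDerivAt L (gd c a)⁻¹ (gfun c a) := hg.to_localInverse hgd
  have hLa : L (gfun c a) = a := (hg.hasStrictFDerivAt_equiv hgd).localInverse_apply_image
  have hrinv : ∀ᶠ y in 𝓝 (gfun c a), gfun c (L y) = y :=
    (hg.hasStrictFDerivAt_equiv hgd).eventually_right_inverse
  have hs0 : s t₀ = gfun c a := (gfun_lorentz hc hv₀).symm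
  have hstend : Filter.Tendsto s (𝓝 t₀) (𝓝 (gfun c a)) := by
    rw [← hs0]; exact hsd.continuousAt
  have hLcont : ContinuousAt L (gfun c a) := hLstrict.hasDerivAt.continuousAt
  have hLs : Filter.Tendsto (fun t => L (s t)) (𝓝 t₀) (𝓝 a) := by
    rw [← hLa]; exact Filter.Tendsto.comp hLcont hstend
  have hev1 : ∀ᶠ t in 𝓝 t₀, gfun c (L (s t)) = s t := hstend.eventually hrinv
  have hev2 : ∀ᶠ t in 𝓝 t₀, (3/4 : ℝ) < L (s t) :=
    hLs.eventually (eventually_gt_nhds (by linarith))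
  have heq : ∀ᶠ t in 𝓝 t₀, lorentz c (v t) = L (s t) := by
    filter_upwards [hev1, hev2, hv] with t h1 h2 h3
    have hγ1 : 1 ≤ lorentz c (v t) := one_le_lorentz hc h3
    have hγs : gfun c (lorentz c (v t)) = s t := gfun_lorentz hc h3
    exact (gfun_strictMonoOn hc).injOn (Set.mem_Ici.2 (by linarith))
      (Set.mem_Ici.2 h2.le) (hγs.trans h1.symm)
  have hLderiv : HasDerivAt L (gd c a)⁻¹ (s t₀) := by rw [hs0]; exact hLstrict.hasDerivAt
  have hLsD : HasDerivAt (fun t => L (s t))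
      ((gd c a)⁻¹ * (2 * ⟪what c (v t₀), w'⟫)) t₀ := hLderiv.comp t₀ hsd
  have hh : HasDerivAt (hfun c) (hd c a) (L (s t₀)) := by
    rw [hs0, hLa]; exact hfun_hasDerivAt (by linarith)
  have hcomp := hh.comp t₀ hLsD
  have heq2 : (fun t => hfun c (lorentz c (v t))) =ᶠ[𝓝 t₀]
      (hfun c ∘ fun t => L (s t)) :=
    heq.mono fun t ht => by simp only [Function.comp_apply]; rw [ht]
  have final := hcomp.congr_of_eventuallyEq heq2
  refine final.congr_deriv ?_
  have hF : ⟪what c (v t₀), w'⟫ = Fmap c (v t₀) * ⟪v t₀, w'⟫ := by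
    rw [what]; exact real_inner_smul_left _ _ _
  have hFa : Fmap c (v t₀) = a * (1 + a / c ^ 2) := by rw [Fmap, ← ha_def]
  have hdne : hd c a ≠ 0 := (hd_pos hc ha1).ne'
  have hgdeq : gd c a = 2 * (a * (1 + a / c ^ 2)) * hd c a := by
    have ha0 : a ≠ 0 := by positivity
    simp only [gd, hd]; field_simp
  have ha0 : a ≠ 0 := by positivity
  have h1a : (1 : ℝ) + a / c ^ 2 ≠ 0 := by positivity
  rw [hF, hFa, hgdeq]
  field_simp

lemma kin_term_continuousWithinAt (hc : 0 < c) {v : ℝ → EuclideanSpace ℝ (Fin d)}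
    {S : Set ℝ} {t₀ : ℝ}
    (hv₀ : ‖v t₀‖ < c) (hv : ∀ᶠ t in 𝓝[S] t₀, ‖v t‖ < c)
    (hw : ContinuousWithinAt (fun t => what c (v t)) S t₀) :
    ContinuousWithinAt (fun t => hfun c (lorentz c (v t))) S t₀ := by
  set a := lorentz c (v t₀) with ha_def
  have ha1 : 1 ≤ a := one_le_lorentz hc hv₀
  set s : ℝ → ℝ := fun t => ‖what c (v t)‖ ^ 2 with hs_def
  have hscont : ContinuousWithinAt s S t₀ := (hw.norm).pow 2
  have hg := gfun_hasStrictDerivAt hc a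
  have hgd : gd c a ≠ 0 := (gd_pos hc (by linarith)).ne'
  set L := hg.localInverse (gfun c) (gd c a) a hgd with hL_def
  have hLstrict : HasStrictDerivAt L (gd c a)⁻¹ (gfun c a) := hg.to_localInverse hgd
  have hLa : L (gfun c a) = a := (hg.hasStrictFDerivAt_equiv hgd).localInverse_apply_image
  have hrinv : ∀ᶠ y in 𝓝 (gfun c a), gfun c (L y) = y :=
    (hg.hasStrictFDerivAt_equiv hgd).eventually_right_inverse
  have hs0 : s t₀ = gfun c a := (gfun_lorentz hc hv₀).symm
  have hstend : Filter.Tendsto s (𝓝[S] t₀) (𝓝 (gfun c a)) := by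
    rw [← hs0]; exact hscont
  have hLcont : ContinuousAt L (gfun c a) := hLstrict.hasDerivAt.continuousAt
  have hLs : Filter.Tendsto (fun t => L (s t)) (𝓝[S] t₀) (𝓝 a) := by
    rw [← hLa]; exact Filter.Tendsto.comp hLcont hstend
  have hev1 : ∀ᶠ t in 𝓝[S] t₀, gfun c (L (s t)) = s t := hstend.eventually hrinv
  have hev2 : ∀ᶠ t in 𝓝[S] t₀, (3/4 : ℝ) < L (s t) :=
    hLs.eventually (eventually_gt_nhds (by linarith))
  have heq : ∀ᶠ t in 𝓝[S] t₀, lorentz c (v t) = L (s t) := by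
    filter_upwards [hev1, hev2, hv] with t h1 h2 h3
    have hγ1 : 1 ≤ lorentz c (v t) := one_le_lorentz hc h3
    have hγs : gfun c (lorentz c (v t)) = s t := gfun_lorentz hc h3
    exact (gfun_strictMonoOn hc).injOn (Set.mem_Ici.2 (by linarith))
      (Set.mem_Ici.2 h2.le) (hγs.trans h1.symm)
  have hhc : ContinuousAt (hfun c) a :=
    (hfun_hasDerivAt (by linarith : (0:ℝ) < a)).differentiableAt.continuousAt
  have hbig : ContinuousWithinAt (fun t => hfun c (L (s t))) S t₀ := by
    have h1 : ContinuousAt (fun y => hfun c (L y)) (gfun c a) := by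
      have := hhc
      rw [← hLa] at this
      exact this.comp hLcont
    have h2 : ContinuousAt (fun y => hfun c (L y)) (s t₀) := by rw [hs0]; exact h1
    exact h2.comp_continuousWithinAt hscont
  refine hbig.congr_of_eventuallyEq ?_ ?_
  · exact heq.mono fun t ht => by simp only []; rw [ht]
  · rw [hs0, hLa]

lemma hasDerivAt_norm_sub {f g : ℝ → EuclideanSpace ℝ (Fin d)}
    {f' g' : EuclideanSpace ℝ (Fin d)} {t : ℝ}
    (hf : HasDerivAt f f' t) (hg : HasDerivAt g g' t) (hne : f t ≠ g t) :
    HasDerivAt (fun s => ‖f s - g s‖) (⟪f t - g t, f' - g'⟫ / ‖f t - g t‖) t := by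
  have hsub : HasDerivAt (fun s => f s - g s) (f' - g') t := hf.sub hg
  have h0 : f t - g t ≠ 0 := sub_ne_zero.2 hne
  have hn0 : ‖f t - g t‖ ≠ 0 := norm_ne_zero_iff.2 h0
  have hsq : HasDerivAt (fun s => ‖f s - g s‖ ^ 2) (2 * ⟪f t - g t, f' - g'⟫) t := hsub.norm_sq
  have hsqrt : HasDerivAt Real.sqrt (1 / (2 * Real.sqrt (‖f t - g t‖ ^ 2))) (‖f t - g t‖ ^ 2) := by
    apply Real.hasDerivAt_sqrt
    positivity
  have hcomp := hsqrt.comp t hsq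
  have heq : (fun s => Real.sqrt (‖f s - g s‖ ^ 2)) = fun s => ‖f s - g s‖ := by
    funext s; rw [Real.sqrt_sq (norm_nonneg _)]
  have final : HasDerivAt (fun s => ‖f s - g s‖)
      (1 / (2 * Real.sqrt (‖f t - g t‖ ^ 2)) * (2 * ⟪f t - g t, f' - g'⟫)) t := by
    rw [← heq]
    exact hcomp
  convert final using 1
  rw [Real.sqrt_sq (norm_nonneg _)]
  field_simp

end CA
namespace CA
open scoped RealInnerProductSpace

lemma sum_filter_swap {N : ℕ} {M : Type*} [AddCommMonoid M] (f : Fin N → Fin N → M) :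
    ∑ i, ∑ j ∈ Finset.univ.filter (fun j => j ≠ i), f i j
      = ∑ i, ∑ j ∈ Finset.univ.filter (fun j => j ≠ i), f j i :=
  Finset.sum_comm' (s := Finset.univ)
    (t := fun i => Finset.univ.filter (fun j => j ≠ i))
    (t' := Finset.univ)
    (s' := fun j => Finset.univ.filter (fun i => i ≠ j))
    (by intro x y; simp [ne_comm])

lemma force_dissip {d N : ℕ} {κ₀ κ₁ κ₂ : ℝ} (hκ₀ : 0 ≤ κ₀) (hκ₁ : 0 ≤ κ₁)
    {φ : ℝ → ℝ} (hφ0 : ∀ r, 0 ≤ φ r) {R : Fin N → Fin N → ℝ}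
    (hRsym : ∀ i j, R i j = R j i) (hN : (0:ℝ) < (N:ℝ))
    (X V : Fin N → EuclideanSpace ℝ (Fin d)) (hne : ∀ i j, i ≠ j → X i ≠ X j) :
    (∑ i, ⟪V i, rcsForce N κ₀ κ₁ κ₂ φ R X V i⟫) +
      κ₂ / (8 * (N:ℝ)) * ∑ i, ∑ j ∈ Finset.univ.filter (fun j => j ≠ i),
        2 * (‖X i - X j‖ - R i j) * (⟪X i - X j, V i - V j⟫ / ‖X i - X j‖) ≤ 0 := by
  have hNne : (N:ℝ) ≠ 0 := hN.ne'
  -- split the force inner product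
  have hsplit : ∑ i, ⟪V i, rcsForce N κ₀ κ₁ κ₂ φ R X V i⟫
      = κ₀ / (N:ℝ) * ∑ i, ∑ j, φ ‖X i - X j‖ * ⟪V i, V j - V i⟫
        + 1 / (2 * (N:ℝ)) * ∑ i, ∑ j ∈ Finset.univ.filter (fun j => j ≠ i),
            ((κ₁ * (⟪V j - V i, X j - X i⟫ / ‖X j - X i‖)
              + κ₂ * (‖X i - X j‖ - R i j)) / ‖X j - X i‖) * ⟪V i, X j - X i⟫ := by
    rw [Finset.mul_sum, Finset.mul_sum, ← Finset.sum_add_distrib]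
    refine Finset.sum_congr rfl fun i _ => ?_
    simp only [rcsForce, inner_add_right, real_inner_smul_right, inner_sum]
  rw [hsplit]
  -- Step B : the velocity alignment term is nonpositive
  have hB : (∑ i, ∑ j, φ ‖X i - X j‖ * ⟪V i, V j - V i⟫) ≤ 0 := by
    have hswap : (∑ i, ∑ j, φ ‖X i - X j‖ * ⟪V i, V j - V i⟫)
        = ∑ i, ∑ j, φ ‖X j - X i‖ * ⟪V j, V i - V j⟫ := Finset.sum_comm
    have hsum : (∑ i, ∑ j, φ ‖X i - X j‖ * ⟪V i, V j - V i⟫)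
          + (∑ i, ∑ j, φ ‖X i - X j‖ * ⟪V i, V j - V i⟫)
        = ∑ i : Fin N, ∑ j : Fin N, (-(φ ‖X i - X j‖ * ‖V i - V j‖ ^ 2)) := by
      nth_rewrite 2 [hswap]
      rw [← Finset.sum_add_distrib]
      refine Finset.sum_congr rfl fun i _ => ?_
      rw [← Finset.sum_add_distrib]
      refine Finset.sum_congr rfl fun j _ => ?_
      rw [norm_sub_rev (X j)]
      have e3 : ⟪V i, V j - V i⟫ + ⟪V j, V i - V j⟫ = -(‖V i - V j‖ ^ 2) := by
        rw [← real_inner_self_eq_norm_sq]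
        simp only [inner_sub_left, inner_sub_right]
        rw [real_inner_comm (V j) (V i)]
        ring
      rw [← mul_add, e3]
      ring
    have hnonpos : (∑ i : Fin N, ∑ j : Fin N, (-(φ ‖X i - X j‖ * ‖V i - V j‖ ^ 2))) ≤ 0 := by
      apply Finset.sum_nonpos; intro i _
      apply Finset.sum_nonpos; intro j _
      have : 0 ≤ φ ‖X i - X j‖ * ‖V i - V j‖ ^ 2 :=
        mul_nonneg (hφ0 _) (by positivity)
      linarith
    linarith
  -- Step C : the bonding/κ₁ part combines with the potential derivative
  have hC : 1 / (2 * (N:ℝ)) * (∑ i, ∑ j ∈ Finset.univ.filter (fun j => j ≠ i),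
          ((κ₁ * (⟪V j - V i, X j - X i⟫ / ‖X j - X i‖)
            + κ₂ * (‖X i - X j‖ - R i j)) / ‖X j - X i‖) * ⟪V i, X j - X i⟫)
      + κ₂ / (8 * (N:ℝ)) * ∑ i, ∑ j ∈ Finset.univ.filter (fun j => j ≠ i),
          2 * (‖X i - X j‖ - R i j) * (⟪X i - X j, V i - V j⟫ / ‖X i - X j‖) ≤ 0 := by
    set S2 := ∑ i, ∑ j ∈ Finset.univ.filter (fun j => j ≠ i),
        ((κ₁ * (⟪V j - V i, X j - X i⟫ / ‖X j - X i‖)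
          + κ₂ * (‖X i - X j‖ - R i j)) / ‖X j - X i‖) * ⟪V i, X j - X i⟫ with hS2def
    set Q := ∑ i, ∑ j ∈ Finset.univ.filter (fun j => j ≠ i),
        (-(((κ₁ * (⟪V j - V i, X j - X i⟫ / ‖X j - X i‖)
          + κ₂ * (‖X i - X j‖ - R i j)) / ‖X j - X i‖) * ⟪V j - V i, X j - X i⟫)) with hQdef
    set S3 := ∑ i, ∑ j ∈ Finset.univ.filter (fun j => j ≠ i),
        2 * (‖X i - X j‖ - R i j) * (⟪X i - X j, V i - V j⟫ / ‖X i - X j‖) with hS3def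
    have h2S2 : S2 + S2 = Q := by
      nth_rewrite 2 [hS2def]
      rw [sum_filter_swap (f := fun i j =>
        ((κ₁ * (⟪V j - V i, X j - X i⟫ / ‖X j - X i‖)
          + κ₂ * (‖X i - X j‖ - R i j)) / ‖X j - X i‖) * ⟪V i, X j - X i⟫)]
      rw [hS2def, hQdef, ← Finset.sum_add_distrib]
      refine Finset.sum_congr rfl fun i _ => ?_
      rw [← Finset.sum_add_distrib]
      refine Finset.sum_congr rfl fun j _ => ?_
      have e1 : ⟪V i - V j, X i - X j⟫ = ⟪V j - V i, X j - X i⟫ := by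
        rw [← neg_sub (V j) (V i), ← neg_sub (X j) (X i), inner_neg_neg]
      have e2 : ‖X i - X j‖ = ‖X j - X i‖ := norm_sub_rev _ _
      have e3 : ⟪V i, X j - X i⟫ + ⟪V j, X i - X j⟫ = -⟪V j - V i, X j - X i⟫ := by
        simp only [inner_sub_left, inner_sub_right]
        ring
      rw [e1, e2, hRsym j i, ← mul_add, e3]
      ring
    have hS2 : S2 = (1/2) * Q := by linarith
    have key : 1 / (4 * (N:ℝ)) * Q + κ₂ / (8 * (N:ℝ)) * S3
        = -(κ₁ / (4 * (N:ℝ))) * ∑ i, ∑ j ∈ Finset.univ.filter (fun j => j ≠ i),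
            (⟪V j - V i, X j - X i⟫ / ‖X j - X i‖) ^ 2 := by
      rw [hQdef, hS3def, Finset.mul_sum, Finset.mul_sum, Finset.mul_sum,
        ← Finset.sum_add_distrib]
      refine Finset.sum_congr rfl fun i _ => ?_
      rw [Finset.mul_sum, Finset.mul_sum, Finset.mul_sum, ← Finset.sum_add_distrib]
      refine Finset.sum_congr rfl fun j hj => ?_
      have hji : j ≠ i := (Finset.mem_filter.mp hj).2
      have hXne : X j ≠ X i := hne j i hji
      have hn : ‖X j - X i‖ ≠ 0 := norm_ne_zero_iff.2 (sub_ne_zero.2 hXne)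
      have e1 : ⟪X i - X j, V i - V j⟫ = ⟪V j - V i, X j - X i⟫ := by
        rw [real_inner_comm, ← neg_sub (V j) (V i), ← neg_sub (X j) (X i), inner_neg_neg]
      have e2 : ‖X i - X j‖ = ‖X j - X i‖ := norm_sub_rev _ _
      rw [e1, e2]
      field_simp
      ring
    have hPnn : 0 ≤ ∑ i, ∑ j ∈ Finset.univ.filter (fun j => j ≠ i),
        (⟪V j - V i, X j - X i⟫ / ‖X j - X i‖) ^ 2 := by
      apply Finset.sum_nonneg; intro i _
      apply Finset.sum_nonneg; intro j _
      positivity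
    have hfinal : -(κ₁ / (4 * (N:ℝ))) * ∑ i, ∑ j ∈ Finset.univ.filter (fun j => j ≠ i),
        (⟪V j - V i, X j - X i⟫ / ‖X j - X i‖) ^ 2 ≤ 0 := by
      apply mul_nonpos_of_nonpos_of_nonneg _ hPnn
      have : 0 ≤ κ₁ / (4 * (N:ℝ)) := by positivity
      linarith
    calc 1 / (2 * (N:ℝ)) * S2 + κ₂ / (8 * (N:ℝ)) * S3
        = 1 / (4 * (N:ℝ)) * Q + κ₂ / (8 * (N:ℝ)) * S3 := by rw [hS2]; ring
      _ = _ := key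
      _ ≤ 0 := hfinal
  have hfirst : κ₀ / (N:ℝ) * ∑ i, ∑ j, φ ‖X i - X j‖ * ⟪V i, V j - V i⟫ ≤ 0 :=
    mul_nonpos_of_nonneg_of_nonpos (by positivity) hB
  linarith

end CA
namespace CA
open scoped RealInnerProductSpace

variable {d N : ℕ} {c κ₀ κ₁ κ₂ : ℝ} {φ : ℝ → ℝ} {R : Fin N → Fin N → ℝ}
  {τ : ℝ≥0∞} {x v : Fin N → ℝ → EuclideanSpace ℝ (Fin d)}

lemma totE_deriv_nonpos (hc : 0 < c) (hκ₀ : 0 ≤ κ₀) (hκ₁ : 0 ≤ κ₁)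
    (hφ0 : ∀ r, 0 ≤ φ r) (hRsym : ∀ i j, R i j = R j i)
    (hsol : IsRCSSol N c κ₀ κ₁ κ₂ φ R τ x v) (hN : (0:ℝ) < (N:ℝ))
    {t₀ : ℝ} (hmem : ∀ᶠ t in 𝓝 t₀, t ∈ dom τ) :
    ∃ D, D ≤ 0 ∧
      HasDerivAt (fun t => totE c κ₂ R (fun i => x i t) (fun i => v i t)) D t₀ := by
  have ht₀ : t₀ ∈ dom τ := hmem.self_of_nhds
  obtain ⟨hvlt, hne, hx', hw'⟩ := hsol t₀ ht₀
  refine ⟨(∑ i, ⟪v i t₀, rcsForce N κ₀ κ₁ κ₂ φ R (fun k => x k t₀) (fun k => v k t₀) i⟫) +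
      κ₂ / (8 * (N:ℝ)) * ∑ i, ∑ j ∈ Finset.univ.filter (fun j => j ≠ i),
        2 * (‖x i t₀ - x j t₀‖ - R i j) *
          (⟪x i t₀ - x j t₀, v i t₀ - v j t₀⟫ / ‖x i t₀ - x j t₀‖), ?_, ?_⟩
  · exact force_dissip hκ₀ hκ₁ hφ0 hRsym hN _ _ (fun i j hij => hne i j hij)
  · have hkin : HasDerivAt (fun t => ∑ i, hfun c (lorentz c (v i t)))
        (∑ i, ⟪v i t₀, rcsForce N κ₀ κ₁ κ₂ φ R (fun k => x k t₀) (fun k => v k t₀) i⟫) t₀ :=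
      HasDerivAt.fun_sum fun i _ =>
        kin_term_hasDerivAt hc (hmem.mono fun t ht => (hsol t ht).1 i) (hw' i)
    have hpot : HasDerivAt (fun t => potE κ₂ R (fun i => x i t))
        (κ₂ / (8 * (N:ℝ)) * ∑ i, ∑ j ∈ Finset.univ.filter (fun j => j ≠ i),
          2 * (‖x i t₀ - x j t₀‖ - R i j) *
            (⟪x i t₀ - x j t₀, v i t₀ - v j t₀⟫ / ‖x i t₀ - x j t₀‖)) t₀ := by
      simp only [potE]
      apply HasDerivAt.const_mul
      apply HasDerivAt.fun_sum; intro i _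
      apply HasDerivAt.fun_sum; intro j hj
      have hji : j ≠ i := (Finset.mem_filter.mp hj).2
      have hd := ((hasDerivAt_norm_sub (hx' i) (hx' j) (hne i j hji.symm)).sub_const
        (R i j)).fun_pow 2
      refine hd.congr_deriv ?_
      norm_num
    have heq : (fun t => totE c κ₂ R (fun i => x i t) (fun i => v i t))
        = fun t => (∑ i, hfun c (lorentz c (v i t))) + potE κ₂ R (fun i => x i t) := by
      funext t; simp only [totE, kinE, hfun]
    rw [heq]
    exact hkin.add hpot

lemma totE_mono (hc : 0 < c) (hκ₀ : 0 ≤ κ₀) (hκ₁ : 0 ≤ κ₁)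
    (hφ0 : ∀ r, 0 ≤ φ r) (hRsym : ∀ i j, R i j = R j i)
    (hsol : IsRCSSol N c κ₀ κ₁ κ₂ φ R τ x v) (hN : (0:ℝ) < (N:ℝ)) :
    ∀ T ∈ dom τ, totE c κ₂ R (fun i => x i T) (fun i => v i T)
      ≤ totE c κ₂ R (fun i => x i 0) (fun i => v i 0) := by
  intro T hT
  set Efun : ℝ → ℝ := fun t => totE c κ₂ R (fun i => x i t) (fun i => v i t) with hE_def
  rcases eq_or_lt_of_le hT.1 with h0 | hTpos
  · exact le_of_eq (by rw [← h0])
  · obtain ⟨r, hr0, hr1, hr2⟩ := ENNReal.lt_iff_exists_real_btwn.mp hT.2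
    have hTr : T < r := (ENNReal.ofReal_lt_ofReal_iff_of_nonneg hT.1).mp hr1
    have hrpos : 0 < r := lt_trans hTpos hTr
    have hr_dom : Set.Icc (0:ℝ) r ⊆ dom τ := fun u hu =>
      ⟨hu.1, lt_of_le_of_lt (ENNReal.ofReal_le_ofReal hu.2) hr2⟩
    have keyD : ∀ t ∈ interior (Set.Icc (0:ℝ) r), ∃ D, D ≤ 0 ∧ HasDerivAt Efun D t := by
      intro t ht
      rw [interior_Icc] at ht
      have hmem : ∀ᶠ s in 𝓝 t, s ∈ dom τ := by
        refine Filter.eventually_of_mem (isOpen_Ioo.mem_nhds ht) (fun u hu => ?_)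
        exact hr_dom ⟨hu.1.le, hu.2.le⟩
      exact totE_deriv_nonpos hc hκ₀ hκ₁ hφ0 hRsym hsol hN hmem
    have hcont : ContinuousOn Efun (Set.Icc 0 r) := by
      have hkin : ContinuousOn (fun t => ∑ i, hfun c (lorentz c (v i t))) (Set.Icc 0 r) := by
        apply continuousOn_finset_sum
        intro i _
        intro t ht
        refine kin_term_continuousWithinAt hc ((hsol t (hr_dom ht)).1 i) ?_ ?_
        · exact Filter.eventually_of_mem self_mem_nhdsWithin
            (fun u hu => (hsol u (hr_dom hu)).1 i)
        · exact ((hsol t (hr_dom ht)).2.2.2 i).continuousAt.continuousWithinAt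
      have hx_cont : ∀ i, ContinuousOn (fun t => x i t) (Set.Icc (0:ℝ) r) := fun i t ht =>
        ((hsol t (hr_dom ht)).2.2.1 i).continuousAt.continuousWithinAt
      have hpot : ContinuousOn (fun t => potE κ₂ R (fun i => x i t)) (Set.Icc 0 r) := by
        simp only [potE]
        apply ContinuousOn.mul continuousOn_const
        apply continuousOn_finset_sum; intro i _
        apply continuousOn_finset_sum; intro j _
        exact (((hx_cont i).sub (hx_cont j)).norm.sub continuousOn_const).pow 2
      have : ContinuousOn (fun t => (∑ i, hfun c (lorentz c (v i t)))
          + potE κ₂ R (fun i => x i t)) (Set.Icc 0 r) := hkin.add hpot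
      convert this using 1
      rfl
    have hanti : AntitoneOn Efun (Set.Icc 0 r) := by
      apply antitoneOn_of_deriv_nonpos (convex_Icc 0 r) hcont
      · intro t ht
        exact ((keyD t ht).choose_spec.2).differentiableAt.differentiableWithinAt
      · intro t ht
        obtain ⟨D, hD1, hD2⟩ := keyD t ht
        rw [hD2.deriv]; exact hD1
    exact hanti ⟨le_refl 0, hrpos.le⟩ ⟨hT.1, hTr.le⟩ hT.1

end CA

/-- Collision avoidance: if `E(0) < N + (κ₂/4N)·min_{i≠j}(R_ij)²` then along any solution
of the RCS model with bonding force on `[0,τ)` the inter-particle distances stay uniformly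
bounded below by the positive constant `min_{k≠l} R_kl − √(4N(E(0)−N)/κ₂)`. -/
theorem collision_avoidance
    (d N : ℕ) (hd : 1 ≤ d) (hN : 2 ≤ N)
    (c κ₀ κ₁ κ₂ : ℝ) (hc : 0 < c) (hκ₀ : 0 ≤ κ₀) (hκ₁ : 0 ≤ κ₁) (hκ₂ : 0 < κ₂)
    (φ : ℝ → ℝ) (φM : ℝ) (hφ : LocallyLipschitz φ)
    (hφ0 : ∀ r, 0 ≤ φ r) (hφM : ∀ r, φ r ≤ φM)
    (R : Fin N → Fin N → ℝ) (hR0 : ∀ i, R i i = 0)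
    (hRsym : ∀ i j, R i j = R j i) (hRnn : ∀ i j, 0 ≤ R i j)
    (hRpos : ∀ i j, i ≠ j → 0 < R i j)
    (Rmin : ℝ)
    (hRmin : IsLeast {r : ℝ | ∃ i j : Fin N, i ≠ j ∧ r = R i j} Rmin)
    (τ : ℝ≥0∞) (hτ : 0 < τ)
    (x v : Fin N → ℝ → EuclideanSpace ℝ (Fin d))
    (hsol : IsRCSSol N c κ₀ κ₁ κ₂ φ R τ x v)
    (hE : totE c κ₂ R (fun i => x i 0) (fun i => v i 0)
        < N + κ₂ / (4 * N) * Rmin ^ 2) :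
    0 < Rmin - Real.sqrt (4 * N * (totE c κ₂ R (fun i => x i 0) (fun i => v i 0) - N) / κ₂) ∧
    ∀ t ∈ dom τ, ∀ i j : Fin N, i ≠ j →
      Rmin - Real.sqrt (4 * N * (totE c κ₂ R (fun i => x i 0) (fun i => v i 0) - N) / κ₂)
        ≤ ‖x i t - x j t‖ := by
  have hNpos : (0:ℝ) < (N:ℝ) := by
    have : 0 < N := by omega
    exact_mod_cast this
  have h0dom : (0:ℝ) ∈ dom τ := ⟨le_refl 0, by simpa using hτ⟩
  set E0 := totE c κ₂ R (fun i => x i 0) (fun i => v i 0) with hE0def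
  set A := 4 * (N:ℝ) * (E0 - N) / κ₂ with hAdef
  obtain ⟨i0, j0, hij0, hR0eq⟩ := hRmin.1
  have hRminpos : 0 < Rmin := hR0eq ▸ hRpos i0 j0 hij0
  have hmono := CA.totE_mono hc hκ₀ hκ₁ hφ0 hRsym hsol hNpos
  -- kinetic energy is at least N
  have hkinN : ∀ t ∈ dom τ, (N:ℝ) ≤ kinE c (fun i => v i t) := by
    intro t ht
    have hv := (hsol t ht).1
    calc (N:ℝ) = ∑ _i : Fin N, (1:ℝ) := by simp
      _ ≤ ∑ i, CA.hfun c (lorentz c (v i t)) :=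
        Finset.sum_le_sum fun i _ => CA.one_le_hfun hc (hv i)
      _ = kinE c (fun i => v i t) := rfl
  -- potential energy is nonneg
  have hpotnn : ∀ t : ℝ, 0 ≤ potE κ₂ R (fun i => x i t) := by
    intro t
    apply mul_nonneg (by positivity)
    apply Finset.sum_nonneg; intro i _
    apply Finset.sum_nonneg; intro j _
    positivity
  have hE0N : (N:ℝ) ≤ E0 := by
    have h1 := hkinN 0 h0dom
    have h2 := hpotnn 0
    have h3 : E0 = kinE c (fun i => v i 0) + potE κ₂ R (fun i => x i 0) := rfl
    linarith
  -- the pair lower bound on the potential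
  have hpair : ∀ t ∈ dom τ, ∀ i j : Fin N, i ≠ j →
      κ₂ / (4 * (N:ℝ)) * (‖x i t - x j t‖ - R i j) ^ 2 ≤ E0 - N := by
    intro t ht i j hij
    set f : Fin N → ℝ :=
      fun k => ∑ l ∈ Finset.univ.filter (fun l => l ≠ k), (‖x k t - x l t‖ - R k l) ^ 2
      with hfdef
    have hfnn : ∀ k, 0 ≤ f k := by
      intro k; apply Finset.sum_nonneg; intro l _; positivity
    have hfi : (‖x i t - x j t‖ - R i j) ^ 2 ≤ f i := by
      simp only [hfdef]
      apply Finset.single_le_sum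
        (f := fun l => (‖x i t - x l t‖ - R i l) ^ 2) (fun l _ => by positivity)
      exact Finset.mem_filter.2 ⟨Finset.mem_univ _, hij.symm⟩
    have hfj : (‖x i t - x j t‖ - R i j) ^ 2 ≤ f j := by
      have : (‖x j t - x i t‖ - R j i) ^ 2 ≤ f j := by
        simp only [hfdef]
        apply Finset.single_le_sum
          (f := fun l => (‖x j t - x l t‖ - R j l) ^ 2) (fun l _ => by positivity)
        exact Finset.mem_filter.2 ⟨Finset.mem_univ _, hij⟩
      rw [norm_sub_rev, hRsym j i] at this
      exact this
    have hsum2 : f i + f j ≤ ∑ k, f k := by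
      have hsub : ({i, j} : Finset (Fin N)) ⊆ Finset.univ := Finset.subset_univ _
      have := Finset.sum_le_sum_of_subset_of_nonneg hsub (fun k _ _ => hfnn k)
      rwa [Finset.sum_pair hij] at this
    have hpot_ge : κ₂ / (8 * (N:ℝ)) * (2 * (‖x i t - x j t‖ - R i j) ^ 2)
        ≤ potE κ₂ R (fun k => x k t) := by
      have h1 : 2 * (‖x i t - x j t‖ - R i j) ^ 2 ≤ ∑ k, f k := by linarith
      have h2 : 0 ≤ κ₂ / (8 * (N:ℝ)) := by positivity
      calc κ₂ / (8 * (N:ℝ)) * (2 * (‖x i t - x j t‖ - R i j) ^ 2)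
          ≤ κ₂ / (8 * (N:ℝ)) * ∑ k, f k := by
            exact mul_le_mul_of_nonneg_left h1 h2
        _ = potE κ₂ R (fun k => x k t) := rfl
    have hEt := hmono t ht
    have hkt := hkinN t ht
    have h3 : totE c κ₂ R (fun k => x k t) (fun k => v k t)
        = kinE c (fun k => v k t) + potE κ₂ R (fun k => x k t) := rfl
    have h4 : potE κ₂ R (fun k => x k t) ≤ E0 - N := by linarith
    have h5 : κ₂ / (8 * (N:ℝ)) * (2 * (‖x i t - x j t‖ - R i j) ^ 2)
        = κ₂ / (4 * (N:ℝ)) * (‖x i t - x j t‖ - R i j) ^ 2 := by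
      field_simp
      ring
    linarith [hpot_ge]
  -- positivity of the collision-avoidance constant
  have hA_lt : A < Rmin ^ 2 := by
    have h1 : E0 - N < κ₂ / (4 * (N:ℝ)) * Rmin ^ 2 := by linarith
    have h2 : 4 * (N:ℝ) * (E0 - N) < 4 * (N:ℝ) * (κ₂ / (4 * (N:ℝ)) * Rmin ^ 2) :=
      mul_lt_mul_of_pos_left h1 (by positivity)
    have h3 : 4 * (N:ℝ) * (κ₂ / (4 * (N:ℝ)) * Rmin ^ 2) = κ₂ * Rmin ^ 2 := by
      field_simp
    rw [hAdef, div_lt_iff₀ hκ₂]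
    nlinarith [h2, h3]
  have hsqrt_lt : Real.sqrt A < Rmin := (Real.sqrt_lt' hRminpos).2 hA_lt
  refine ⟨by linarith, ?_⟩
  intro t ht i j hij
  have hb := hpair t ht i j hij
  have h1 : (R i j - ‖x i t - x j t‖) ^ 2 ≤ A := by
    have h2 : 4 * (N:ℝ) * (κ₂ / (4 * (N:ℝ)) * (‖x i t - x j t‖ - R i j) ^ 2)
        = κ₂ * (‖x i t - x j t‖ - R i j) ^ 2 := by field_simp
    have h3 := mul_le_mul_of_nonneg_left hb (by positivity : (0:ℝ) ≤ 4 * (N:ℝ))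
    rw [hAdef, le_div_iff₀ hκ₂]
    nlinarith [h2, h3]
  have h2 : R i j - ‖x i t - x j t‖ ≤ Real.sqrt A := by
    calc R i j - ‖x i t - x j t‖ ≤ |R i j - ‖x i t - x j t‖| := le_abs_self _
      _ = Real.sqrt ((R i j - ‖x i t - x j t‖) ^ 2) := (Real.sqrt_sq_eq_abs _).symm
      _ ≤ Real.sqrt A := Real.sqrt_le_sqrt h1
  have h3 : Rmin ≤ R i j := hRmin.2 ⟨i, j, hij, rfl⟩
  linarith
end
end
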